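/- arXiv:1609.00488 — 9 statements merged into one kernel-verified Lean document; each statement's English description precedes it below -/
import Mathlib

section
/- Let g : ℝⁿ → ℝⁿ be a C^∞ map and a ∈ ℝⁿ. Define the Jacobian determinant J : ℝⁿ → ℝ by J(t) = det(fderiv ℝ g t) (the determinant of the derivative, viewed as a linear endomorphism of ℝⁿ). If rank(fderiv ℝ g a) + 2 ≤ n (i.e. g has corank at least 2 at a, which forces J(a) = 0), then fderiv ℝ J a = 0. -/
/-!
The determinant is multilinear in the rows, so its derivative at `M` in the direction `H` is
`∑ i, det (M with row i replaced by row i of H)`. Replacing one row raises the rank by at most one,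
so if `rank M + 2 ≤ n` every summand is a singular determinant and `det` has derivative zero
at `M`. The Jacobian determinant is `det ∘ fderiv ℝ g`, and the chain rule finishes.
-/

open Module Submodule

namespace Matrix

variable {m n K : Type*} [Field K] [Fintype m] [Fintype n] [DecidableEq m]

theorem rank_updateRow_le (M : Matrix m n K) (i : m) (w : n → K) :
    (M.updateRow i w).rank ≤ M.rank + 1 := by
  rw [rank_eq_finrank_span_row, rank_eq_finrank_span_row]
  have hrows : span K (Set.range (M.updateRow i w)) ≤ span K (Set.range M) ⊔ K ∙ w := by
    refine span_le.2 ?_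
    rintro _ ⟨j, rfl⟩
    by_cases hj : j = i
    · subst hj
      rw [updateRow_self]
      exact mem_sup_right (mem_span_singleton_self w)
    · rw [updateRow_ne hj]
      exact mem_sup_left (subset_span ⟨j, rfl⟩)
  calc finrank K (span K (Set.range (M.updateRow i w)))
      ≤ finrank K ↥(span K (Set.range M) ⊔ K ∙ w) := finrank_mono hrows
    _ ≤ finrank K (span K (Set.range M)) + finrank K (K ∙ w) :=
      finrank_add_le_finrank_add_finrank _ _
    _ ≤ finrank K (span K (Set.range M)) + 1 := by
      gcongr
      simpa using finrank_span_le_card ({w} : Set (n → K))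

theorem det_updateRow_eq_zero_of_rank_add_two_le (M : Matrix m m K)
    (hM : M.rank + 2 ≤ Fintype.card m) (i : m) (w : m → K) :
    (M.updateRow i w).det = 0 := by
  by_contra hdet
  have hfull := rank_of_isUnit _ ((isUnit_iff_isUnit_det _).2 (isUnit_iff_ne_zero.2 hdet))
  have := M.rank_updateRow_le i w
  omega

section Calculus

variable (𝕜 ι : Type*) [NontriviallyNormedField 𝕜] [Fintype ι] [DecidableEq ι]

def detRowContinuousMultilinearMap :
    ContinuousMultilinearMap 𝕜 (fun _ : ι => ι → 𝕜) 𝕜 where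
  toMultilinearMap := detRowAlternating.toMultilinearMap
  cont := continuous_id.matrix_det

variable {𝕜 ι}

theorem hasFDerivAt_det_zero_of_rank_add_two_le (M : ι → ι → 𝕜)
    (hM : (of M).rank + 2 ≤ Fintype.card ι) :
    HasFDerivAt (fun A : ι → ι → 𝕜 => (of A).det) (0 : (ι → ι → 𝕜) →L[𝕜] 𝕜) M := by
  have hderiv : (detRowContinuousMultilinearMap 𝕜 ι).linearDeriv M = 0 :=
    ContinuousLinearMap.ext fun H => by
      rw [ContinuousMultilinearMap.linearDeriv_apply]
      exact Finset.sum_eq_zero fun i _ =>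
        det_updateRow_eq_zero_of_rank_add_two_le (of M) hM i (H i)
  rw [← hderiv]
  exact (detRowContinuousMultilinearMap 𝕜 ι).hasFDerivAt M

end Calculus

end Matrix

theorem LinearMap.rank_toMatrix {R M₁ M₂ ι₁ ι₂ : Type*} [CommSemiring R] [AddCommMonoid M₁]
    [AddCommMonoid M₂] [Module R M₁] [Module R M₂] [Fintype ι₁] [Fintype ι₂] [DecidableEq ι₁]
    (b₁ : Basis ι₁ R M₁) (b₂ : Basis ι₂ R M₂) (f : M₁ →ₗ[R] M₂) :
    (toMatrix b₁ b₂ f).rank = finrank R (range f) := by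
  rw [Matrix.rank_eq_finrank_range_toLin _ b₂ b₁, Matrix.toLin_toMatrix]

theorem hasFDerivAt_det_zero_of_finrank_range_add_two_le {𝕜 E : Type*}
    [NontriviallyNormedField 𝕜] [CompleteSpace 𝕜] [NormedAddCommGroup E] [NormedSpace 𝕜 E]
    [FiniteDimensional 𝕜 E] (L : E →L[𝕜] E)
    (hL : finrank 𝕜 (LinearMap.range (L : E →ₗ[𝕜] E)) + 2 ≤ finrank 𝕜 E) :
    HasFDerivAt (fun A : E →L[𝕜] E => LinearMap.det (A : E →ₗ[𝕜] E))
      (0 : (E →L[𝕜] E) →L[𝕜] 𝕜) L := by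
  let b := finBasis 𝕜 E
  let matrixOf : (E →L[𝕜] E) →L[𝕜] (Fin (finrank 𝕜 E) → Fin (finrank 𝕜 E) → 𝕜) :=
    LinearMap.toContinuousLinearMap
      ((LinearMap.toMatrix b b).toLinearMap ∘ₗ ContinuousLinearMap.coeLM 𝕜)
  have hdet : (fun A : E →L[𝕜] E => LinearMap.det (A : E →ₗ[𝕜] E)) =
      fun A => (Matrix.of (matrixOf A)).det := by
    funext A
    exact (LinearMap.det_toMatrix b _).symm
  have hrank : (Matrix.of (matrixOf L)).rank + 2 ≤ Fintype.card (Fin (finrank 𝕜 E)) := by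
    show (LinearMap.toMatrix b b (L : E →ₗ[𝕜] E)).rank + 2 ≤ _
    rwa [LinearMap.rank_toMatrix, Fintype.card_fin]
  rw [hdet]
  have hcomp := (Matrix.hasFDerivAt_det_zero_of_rank_add_two_le _ hrank).comp L
    matrixOf.hasFDerivAt
  rwa [ContinuousLinearMap.zero_comp] at hcomp

/-- Let `g : ℝⁿ → ℝⁿ` be a `C^∞` map and `a ∈ ℝⁿ`. Define the Jacobian
determinant `J : ℝⁿ → ℝ` by `J t = det (fderiv ℝ g t)` (the determinant of the derivative,
viewed as a linear endomorphism of `ℝⁿ`). If `rank (fderiv ℝ g a) + 2 ≤ n` (i.e. `g` has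
corank at least `2` at `a`), then `fderiv ℝ J a = 0`. -/
theorem fderiv_jacobian_det_eq_zero_of_corank_ge_two
    (n : ℕ) (g : EuclideanSpace ℝ (Fin n) → EuclideanSpace ℝ (Fin n))
    (hg : ContDiff ℝ (⊤ : ℕ∞) g) (a : EuclideanSpace ℝ (Fin n))
    (h : Module.finrank ℝ (LinearMap.range (fderiv ℝ g a : EuclideanSpace ℝ (Fin n) →ₗ[ℝ] EuclideanSpace ℝ (Fin n))) + 2 ≤ n) :
    fderiv ℝ (fun t => LinearMap.det
      ((fderiv ℝ g t : EuclideanSpace ℝ (Fin n) →L[ℝ] EuclideanSpace ℝ (Fin n)) :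
        EuclideanSpace ℝ (Fin n) →ₗ[ℝ] EuclideanSpace ℝ (Fin n))) a = 0 := by
  have hg' : DifferentiableAt ℝ (fderiv ℝ g) a :=
    (hg.fderiv_right (m := 1) (WithTop.coe_le_coe.2 le_top)).differentiable one_ne_zero a
  have hJ := (hasFDerivAt_det_zero_of_finrank_range_add_two_le _
    (h.trans_eq finrank_euclideanSpace_fin.symm)).comp a hg'.hasFDerivAt
  rw [ContinuousLinearMap.zero_comp] at hJ
  exact hJ.fderiv
end

section
/- Let U, U' ⊆ ℝⁿ be open, f : U → ℝ^m a C^∞ map (n ≤ m), and T : U' → U a C^∞ diffeomorphism. Let h₁, …, h_n : U → ℝ^m and k₁, …, k_n : U' → ℝ^m be smooth maps which are linearly independent at every point, and suppose that span{k₁(s), …, k_n(s)} = span{h₁(T(s)), …, h_n(T(s))} for every s ∈ U'. If σ : U → ℝ is a signed area density function of f relative to (h₁, …, h_n) and σ̃ : U' → ℝ is a signed area density function of f ∘ T relative to (k₁, …, k_n), then there exists a smooth nowhere-vanishing function c : U' → ℝ such that σ̃(s) = c(s) · σ(T(s)) for every s ∈ U'. In particular, the signed area density function of a frontal is well defined up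 to 𝒦-equivalence, independently of the choice of frame and of coordinates on the source. -/
/-!
Pair both sides of the two density identities with the alternating form
`v ↦ det ⟪h i (T s), v j⟫` on `⋀ⁿ ℝ^m`. Since `D(f ∘ T) = Df ∘ DT`, the pairing of
`ι (∂(f ∘ T)/∂s)` is `det DT` times that of `ι (∂f/∂t)`, hence
`σ̃ s · det ⟪h i (T s), k j s⟫ = det DT(s) · σ (T s) · det ⟪h i (T s), h j (T s)⟫`.
Both inner-product determinants vanish nowhere because the frames are independent and span the
same plane, and `det DT` vanishes nowhere because `T` has a smooth inverse; so
`c = det DT · det ⟪h, h⟫ / det ⟪h, k⟫` works.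
-/

open Set Filter Topology

section Smoothness

variable {𝕜 X : Type*} [NontriviallyNormedField 𝕜] [NormedAddCommGroup X] [NormedSpace 𝕜 X]
  {s : Set X} {r : WithTop ℕ∞}

theorem ContDiffOn.matrix_det {ι : Type*} [Fintype ι] [DecidableEq ι]
    {A : X → Matrix ι ι 𝕜} (hA : ∀ i j, ContDiffOn 𝕜 r (fun x => A x i j) s) :
    ContDiffOn 𝕜 r (fun x => (A x).det) s := by
  simp_rw [Matrix.det_apply, Units.smul_def, zsmul_eq_mul]
  exact ContDiffOn.sum fun σ _ =>
    contDiffOn_const.mul <| contDiffOn_prod fun i _ => hA (σ i) i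

theorem ContDiffOn.continuousLinearMap_det [CompleteSpace 𝕜] {F : Type*} [NormedAddCommGroup F]
    [NormedSpace 𝕜 F] [FiniteDimensional 𝕜 F] {A : X → F →L[𝕜] F} (hA : ContDiffOn 𝕜 r A s) :
    ContDiffOn 𝕜 r (fun x => (A x).det) s := by
  classical
  let b := Module.finBasis 𝕜 F
  simp_rw [ContinuousLinearMap.det, ← LinearMap.det_toMatrix b]
  refine ContDiffOn.matrix_det fun i j => ?_
  simp_rw [LinearMap.toMatrix_apply]
  exact (LinearMap.toContinuousLinearMap (b.coord i)).contDiff.comp_contDiffOn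
    (hA.clm_apply contDiffOn_const)

end Smoothness

theorem det_fderiv_ne_zero_of_leftInverse {𝕜 F : Type*} [NontriviallyNormedField 𝕜]
    [NormedAddCommGroup F] [NormedSpace 𝕜 F] [FiniteDimensional 𝕜 F] {T S : F → F} {x : F}
    (hT : DifferentiableAt 𝕜 T x) (hS : DifferentiableAt 𝕜 S (T x))
    (hST : S ∘ T =ᶠ[𝓝 x] id) :
    (fderiv 𝕜 T x).det ≠ 0 := by
  have hcomp : (fderiv 𝕜 S (T x)).comp (fderiv 𝕜 T x) = ContinuousLinearMap.id 𝕜 F := by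
    rw [← fderiv_comp x hS hT, hST.fderiv_eq, fderiv_id]
  have hdet := congrArg ContinuousLinearMap.det hcomp
  rw [ContinuousLinearMap.det, ContinuousLinearMap.toLinearMap_comp, LinearMap.det_comp,
    ContinuousLinearMap.det, ContinuousLinearMap.coe_id, LinearMap.det_id] at hdet
  exact right_ne_zero_of_mul_eq_one hdet

namespace AlternatingMap

variable {R M N : Type*} [CommRing R] [AddCommGroup M] [Module R M] [AddCommGroup N] [Module R N]

theorem apply_eq_smul_of_ιMulti_eq_smul {n : ℕ} (φ : M [⋀^Fin n]→ₗ[R] N) {v w : Fin n → M}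
    {a : R} (h : ExteriorAlgebra.ιMulti R n v = a • ExteriorAlgebra.ιMulti R n w) :
    φ v = a • φ w := by
  have := congrArg (ExteriorAlgebra.liftAlternating (R := R) (Pi.single n φ)) h
  simpa only [map_smul, ExteriorAlgebra.liftAlternating_apply_ιMulti, Pi.single_eq_same] using this

theorem apply_linearMap_comp_basis {ι : Type*} [Fintype ι] [DecidableEq ι]
    (φ : M [⋀^ι]→ₗ[R] R) (e : Module.Basis ι R M) (B : M →ₗ[R] M) :
    φ (B ∘ e) = LinearMap.det B * φ e := by
  rw [φ.eq_smul_basis_det e, smul_apply, smul_apply, Module.Basis.det_comp, e.det_self]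
  simp only [smul_eq_mul]
  ring

theorem mul_apply_eq_of_ιMulti_comp_eq_smul {F : Type*} [AddCommGroup F] [Module R F] {n : ℕ}
    (φ : M [⋀^Fin n]→ₗ[R] R) (e : Module.Basis (Fin n) R F) (A : F →ₗ[R] M) (B : F →ₗ[R] F)
    {u w : Fin n → M} {a b : R}
    (ha : ExteriorAlgebra.ιMulti R n (A ∘ e) = a • ExteriorAlgebra.ιMulti R n u)
    (hb : ExteriorAlgebra.ιMulti R n (A ∘ B ∘ e) = b • ExteriorAlgebra.ιMulti R n w) :
    b * φ w = LinearMap.det B * a * φ u :=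
  calc b * φ w = φ (A ∘ B ∘ e) := (φ.apply_eq_smul_of_ιMulti_eq_smul hb).symm
    _ = φ.compLinearMap A (B ∘ e) := rfl
    _ = LinearMap.det B * φ.compLinearMap A e := (φ.compLinearMap A).apply_linearMap_comp_basis e B
    _ = LinearMap.det B * a * φ u := by
      rw [mul_assoc, ← smul_eq_mul a, ← φ.apply_eq_smul_of_ιMulti_eq_smul ha]
      rfl

end AlternatingMap

section InnerDet

variable {E : Type*} [NormedAddCommGroup E] [InnerProductSpace ℝ E]
  {ι : Type*} [Fintype ι] [DecidableEq ι]

noncomputable def innerDet (u : ι → E) : E [⋀^ι]→ₗ[ℝ] ℝ :=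
  Matrix.detRowAlternating.compLinearMap (LinearMap.pi fun i => innerₛₗ ℝ (u i))

theorem innerDet_apply (u v : ι → E) :
    innerDet u v = (Matrix.of fun j i => inner ℝ (u i) (v j)).det :=
  rfl

theorem innerDet_ne_zero {u v : ι → E} (hu : LinearIndependent ℝ u)
    (hle : Submodule.span ℝ (range u) ≤ Submodule.span ℝ (range v)) : innerDet u v ≠ 0 := by
  rw [innerDet_apply]
  intro hdet
  obtain ⟨x, hx0, hx⟩ := Matrix.exists_mulVec_eq_zero_iff.2 hdet
  set w := ∑ i, x i • u i
  have hwv : ∀ j, inner ℝ w (v j) = 0 := fun j => by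
    simpa [w, sum_inner, real_inner_smul_left, Matrix.mulVec, dotProduct, mul_comm]
      using congrFun hx j
  have hw_span : w ∈ Submodule.span ℝ (range v) :=
    hle (Submodule.sum_mem _ fun i _ => Submodule.smul_mem _ _ (Submodule.subset_span ⟨i, rfl⟩))
  have hv_perp : Submodule.span ℝ (range v) ≤ (ℝ ∙ w)ᗮ :=
    Submodule.span_le.2 <| range_subset_iff.2 fun j =>
      Submodule.mem_orthogonal_singleton_iff_inner_right.2 (hwv j)
  have hw : w = 0 := inner_self_eq_zero.1 <|
    Submodule.mem_orthogonal_singleton_iff_inner_right.1 (hv_perp hw_span)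
  exact hx0 (funext (Fintype.linearIndependent_iff.1 hu x hw))

theorem ContDiffOn.innerDet {X : Type*} [NormedAddCommGroup X] [NormedSpace ℝ X] {s : Set X}
    {r : WithTop ℕ∞} {u v : ι → X → E}
    (hu : ∀ i, ContDiffOn ℝ r (u i) s) (hv : ∀ i, ContDiffOn ℝ r (v i) s) :
    ContDiffOn ℝ r (fun x => innerDet (fun i => u i x) (fun i => v i x)) s := by
  simp_rw [innerDet_apply]
  exact ContDiffOn.matrix_det fun j i => (hu i).inner ℝ (hv j)

end InnerDet

theorem density_kEquivalent_of_change_of_frame_and_coordinates_general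
    (n m : ℕ)
    (U U' : Set (EuclideanSpace ℝ (Fin n))) (hU : IsOpen U) (hU' : IsOpen U')
    (f : EuclideanSpace ℝ (Fin n) → EuclideanSpace ℝ (Fin m))
    (hf : ContDiffOn ℝ (⊤ : ℕ∞) f U)
    (T S : EuclideanSpace ℝ (Fin n) → EuclideanSpace ℝ (Fin n))
    (hT : ContDiffOn ℝ (⊤ : ℕ∞) T U') (hS : ContDiffOn ℝ (⊤ : ℕ∞) S U)
    (hTU : Set.MapsTo T U' U)
    (hST : ∀ s ∈ U', S (T s) = s)
    (h k : Fin n → EuclideanSpace ℝ (Fin n) → EuclideanSpace ℝ (Fin m))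
    (hh : ∀ i, ContDiffOn ℝ (⊤ : ℕ∞) (h i) U)
    (hk : ∀ i, ContDiffOn ℝ (⊤ : ℕ∞) (k i) U')
    (hhli : ∀ t ∈ U, LinearIndependent ℝ (fun i => h i t))
    (hspan : ∀ s ∈ U',
      Submodule.span ℝ (Set.range fun i => k i s)
        = Submodule.span ℝ (Set.range fun i => h i (T s)))
    (σ : EuclideanSpace ℝ (Fin n) → ℝ)
    (hσdens : ∀ t ∈ U,
      ExteriorAlgebra.ιMulti ℝ n
          (fun i => fderiv ℝ f t (EuclideanSpace.single i (1 : ℝ)))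
        = σ t • ExteriorAlgebra.ιMulti ℝ n (fun i => h i t))
    (σ' : EuclideanSpace ℝ (Fin n) → ℝ)
    (hσ'dens : ∀ s ∈ U',
      ExteriorAlgebra.ιMulti ℝ n
          (fun i => fderiv ℝ (f ∘ T) s (EuclideanSpace.single i (1 : ℝ)))
        = σ' s • ExteriorAlgebra.ιMulti ℝ n (fun i => k i s)) :
    ∃ c : EuclideanSpace ℝ (Fin n) → ℝ,
      ContDiffOn ℝ (⊤ : ℕ∞) c U' ∧ (∀ s ∈ U', c s ≠ 0) ∧
      (∀ s ∈ U', σ' s = c s * σ (T s)) := by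
  set J := fun s => (fderiv ℝ T s).det
  set G := fun s => innerDet (fun i => h i (T s)) (fun i => h i (T s))
  set Q := fun s => innerDet (fun i => h i (T s)) (fun i => k i s)
  have hTd : ∀ s ∈ U', DifferentiableAt ℝ T s := fun s hs =>
    (hT.differentiableOn (by simp)).differentiableAt (hU'.mem_nhds hs)
  have hSd : ∀ t ∈ U, DifferentiableAt ℝ S t := fun t ht =>
    (hS.differentiableOn (by simp)).differentiableAt (hU.mem_nhds ht)
  have hfd : ∀ t ∈ U, DifferentiableAt ℝ f t := fun t ht =>
    (hf.differentiableOn (by simp)).differentiableAt (hU.mem_nhds ht)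
  have hJ : ∀ s ∈ U', J s ≠ 0 := fun s hs =>
    det_fderiv_ne_zero_of_leftInverse (hTd s hs) (hSd _ (hTU hs))
      (eventually_of_mem (hU'.mem_nhds hs) hST)
  have hG : ∀ s ∈ U', G s ≠ 0 := fun s hs => innerDet_ne_zero (hhli _ (hTU hs)) le_rfl
  have hQ : ∀ s ∈ U', Q s ≠ 0 := fun s hs => innerDet_ne_zero (hhli _ (hTU hs)) (hspan s hs).ge
  have hkey : ∀ s ∈ U', σ' s * Q s = J s * σ (T s) * G s := by
    intro s hs
    have hchain : fderiv ℝ (f ∘ T) s = (fderiv ℝ f (T s)).comp (fderiv ℝ T s) :=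
      fderiv_comp s (hfd _ (hTU hs)) (hTd s hs)
    refine (innerDet _).mul_apply_eq_of_ιMulti_comp_eq_smul
      (EuclideanSpace.basisFun (Fin n) ℝ).toBasis (fderiv ℝ f (T s)) (fderiv ℝ T s) ?_ ?_
    · simpa [Function.comp_def] using hσdens (T s) (hTU hs)
    · rw [← hσ'dens s hs, hchain]
      simp [Function.comp_def]
  refine ⟨fun s => J s * G s / Q s, ?_, fun s hs => div_ne_zero (mul_ne_zero (hJ s hs) (hG s hs))
    (hQ s hs), fun s hs => ?_⟩
  · have hhT i := (hh i).comp hT hTU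
    exact (((hT.fderiv_of_isOpen hU' le_rfl).continuousLinearMap_det).mul
      (ContDiffOn.innerDet hhT hhT)).div (ContDiffOn.innerDet hhT hk) hQ
  · rw [div_mul_eq_mul_div, eq_div_iff (hQ s hs), hkey s hs]
    ring

/-- Invariance of the signed area density up to `𝒦`-equivalence.
Let `U, U' ⊆ ℝⁿ` be open, `f : U → ℝ^m` a `C^∞` map (`n ≤ m`), and `T : U' → U` a `C^∞`
diffeomorphism (with smooth inverse `S`).  Let `(h₁, …, h_n)` and `(k₁, …, k_n)` be smooth
pointwise linearly independent frames on `U` and `U'` respectively satisfying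
`span{k₁(s), …, k_n(s)} = span{h₁(T s), …, h_n(T s)}` for every `s ∈ U'`.
If `σ` is a signed area density of `f` relative to `(h_i)` and `σ̃` is a signed area density
of `f ∘ T` relative to `(k_i)`, then there is a smooth nowhere-vanishing `c : U' → ℝ` with
`σ̃ s = c s * σ (T s)` for all `s ∈ U'`.  (Lemma 5.2 of the paper.) -/
theorem density_kEquivalent_of_change_of_frame_and_coordinates
    (n m : ℕ) (hnm : n ≤ m)
    (U U' : Set (EuclideanSpace ℝ (Fin n))) (hU : IsOpen U) (hU' : IsOpen U')
    (f : EuclideanSpace ℝ (Fin n) → EuclideanSpace ℝ (Fin m))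
    (hf : ContDiffOn ℝ (⊤ : ℕ∞) f U)
    (T S : EuclideanSpace ℝ (Fin n) → EuclideanSpace ℝ (Fin n))
    (hT : ContDiffOn ℝ (⊤ : ℕ∞) T U') (hS : ContDiffOn ℝ (⊤ : ℕ∞) S U)
    (hTU : Set.MapsTo T U' U) (hSU : Set.MapsTo S U U')
    (hST : ∀ s ∈ U', S (T s) = s) (hTS : ∀ t ∈ U, T (S t) = t)
    (h k : Fin n → EuclideanSpace ℝ (Fin n) → EuclideanSpace ℝ (Fin m))
    (hh : ∀ i, ContDiffOn ℝ (⊤ : ℕ∞) (h i) U)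
    (hk : ∀ i, ContDiffOn ℝ (⊤ : ℕ∞) (k i) U')
    (hhli : ∀ t ∈ U, LinearIndependent ℝ (fun i => h i t))
    (hkli : ∀ s ∈ U', LinearIndependent ℝ (fun i => k i s))
    (hspan : ∀ s ∈ U',
      Submodule.span ℝ (Set.range fun i => k i s)
        = Submodule.span ℝ (Set.range fun i => h i (T s)))
    (σ : EuclideanSpace ℝ (Fin n) → ℝ) (hσ : ContDiffOn ℝ (⊤ : ℕ∞) σ U)
    (hσdens : ∀ t ∈ U,
      ExteriorAlgebra.ιMulti ℝ n
          (fun i => fderiv ℝ f t (EuclideanSpace.single i (1 : ℝ)))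
        = σ t • ExteriorAlgebra.ιMulti ℝ n (fun i => h i t))
    (σ' : EuclideanSpace ℝ (Fin n) → ℝ) (hσ' : ContDiffOn ℝ (⊤ : ℕ∞) σ' U')
    (hσ'dens : ∀ s ∈ U',
      ExteriorAlgebra.ιMulti ℝ n
          (fun i => fderiv ℝ (f ∘ T) s (EuclideanSpace.single i (1 : ℝ)))
        = σ' s • ExteriorAlgebra.ιMulti ℝ n (fun i => k i s)) :
    ∃ c : EuclideanSpace ℝ (Fin n) → ℝ,
      ContDiffOn ℝ (⊤ : ℕ∞) c U' ∧ (∀ s ∈ U', c s ≠ 0) ∧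
      (∀ s ∈ U', σ' s = c s * σ (T s)) :=
  density_kEquivalent_of_change_of_frame_and_coordinates_general n m U U' hU hU' f hf T S hT hS hTU
    hST h k hh hk hhli hspan σ hσdens σ' hσ'dens
end

section
/- Let U, U' ⊆ ℝⁿ be open and W, W' ⊆ ℝ^m be open, with n ≤ m. Let f : U → ℝ^m be a C^∞ map with f(U) ⊆ W which is a frontal at a point a ∈ U. Let φ : U' → U be a C^∞ diffeomorphism and Φ : W → W' a C^∞ diffeomorphism. Then the composite g = Φ ∘ f ∘ φ : U' → ℝ^m is a frontal at the point a' = φ⁻¹(a). In particular, being a frontal is invariant under right-left (𝒜-) equivalence. -/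
noncomputable section

open Set

/-- A `C^∞` map `f : U → ℝ^m` (with `U ⊆ ℝⁿ` open, `n ≤ m`) is a *frontal* at `a ∈ U` if
on some open neighbourhood `V ⊆ U` of `a` there are smooth maps `h₁, …, h_n : V → ℝ^m`,
linearly independent at every point of `V`, whose pointwise span contains the range of the
derivative of `f`. -/
def IsFrontalAt (n m : ℕ) (U : Set (EuclideanSpace ℝ (Fin n)))
    (f : EuclideanSpace ℝ (Fin n) → EuclideanSpace ℝ (Fin m))
    (a : EuclideanSpace ℝ (Fin n)) : Prop :=
  ∃ V : Set (EuclideanSpace ℝ (Fin n)), IsOpen V ∧ a ∈ V ∧ V ⊆ U ∧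
    ∃ h : Fin n → EuclideanSpace ℝ (Fin n) → EuclideanSpace ℝ (Fin m),
      (∀ i, ContDiffOn ℝ (⊤ : ℕ∞) (h i) V) ∧
      (∀ t ∈ V, LinearIndependent ℝ (fun i => h i t)) ∧
      (∀ t ∈ V, LinearMap.range ((fderiv ℝ f t : EuclideanSpace ℝ (Fin n) →ₗ[ℝ] EuclideanSpace ℝ (Fin m))) ≤
        Submodule.span ℝ (Set.range fun i => h i t))

/-!
A frame of `f` at `a` transports along both diffeomorphisms. Precomposing with `φ` only
shrinks the range of the derivative, so `h ∘ φ` is a frame of `f ∘ φ`. Postcomposing with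
`Φ` multiplies the derivative on the left by `dΦ`, which is injective because `Φ` has the
smooth left inverse `Ψ`; hence `dΦ (h ∘ f)` is again a pointwise independent frame, and it is
smooth because `dΦ` is.
-/

open Filter Topology

section Calculus

variable {E F : Type*} [NormedAddCommGroup E] [NormedSpace ℝ E]
  [NormedAddCommGroup F] [NormedSpace ℝ F]

theorem injective_fderiv_of_eventually_leftInverse {Φ : E → F} {Ψ : F → E} {x : E}
    (hΦ : DifferentiableAt ℝ Φ x) (hΨ : DifferentiableAt ℝ Ψ (Φ x))
    (hinv : Ψ ∘ Φ =ᶠ[𝓝 x] id) :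
    Function.Injective (fderiv ℝ Φ x) := by
  have hid : (fderiv ℝ Ψ (Φ x)).comp (fderiv ℝ Φ x) = ContinuousLinearMap.id ℝ E := by
    rw [← fderiv_comp x hΨ hΦ, hinv.fderiv_eq, fderiv_id]
  exact Function.LeftInverse.injective (g := fderiv ℝ Ψ (Φ x)) fun v => by
    simpa using congrArg (fun L : E →L[ℝ] E => L v) hid

theorem ContDiffOn.differentiableAt_of_isOpen {f : E → F} {s : Set E} {n : WithTop ℕ∞}
    (hf : ContDiffOn ℝ n f s) (hs : IsOpen s) (hn : n ≠ 0) {x : E} (hx : x ∈ s) :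
    DifferentiableAt ℝ f x :=
  (hf.differentiableOn hn).differentiableAt (hs.mem_nhds hx)

end Calculus

theorem LinearMap.range_comp_le_span_image {R M N P : Type*} [Semiring R]
    [AddCommMonoid M] [AddCommMonoid N] [AddCommMonoid P] [Module R M] [Module R N] [Module R P]
    (L : M →ₗ[R] N) (A : P →ₗ[R] M) {S : Set M} (hA : range A ≤ Submodule.span R S) :
    range (L ∘ₗ A) ≤ Submodule.span R (L '' S) := by
  rw [LinearMap.range_comp, ← Submodule.map_span]
  exact Submodule.map_mono hA

namespace IsFrontalAt

variable {n m : ℕ} {U U' : Set (EuclideanSpace ℝ (Fin n))}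
  {f : EuclideanSpace ℝ (Fin n) → EuclideanSpace ℝ (Fin m)}

theorem comp_right {φ : EuclideanSpace ℝ (Fin n) → EuclideanSpace ℝ (Fin n)}
    {a' : EuclideanSpace ℝ (Fin n)} (hfront : IsFrontalAt n m U f (φ a'))
    (hU : IsOpen U) (hU' : IsOpen U') (hf : ContDiffOn ℝ (⊤ : ℕ∞) f U)
    (hφ : ContDiffOn ℝ (⊤ : ℕ∞) φ U') (ha' : a' ∈ U') :
    IsFrontalAt n m U' (fun s => f (φ s)) a' := by
  obtain ⟨V, hV, haV, hVU, h, hh, hli, hspan⟩ := hfront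
  refine ⟨U' ∩ φ ⁻¹' V, hφ.continuousOn.isOpen_inter_preimage hU' hV, ⟨ha', haV⟩,
    inter_subset_left, fun i s => h i (φ s),
    fun i => (hh i).comp (hφ.mono inter_subset_left) fun _ hs => hs.2,
    fun s hs => hli (φ s) hs.2, fun s ⟨hs, hsV⟩ => ?_⟩
  rw [fderiv_fun_comp s (hf.differentiableAt_of_isOpen hU (by simp) (hVU hsV))
    (hφ.differentiableAt_of_isOpen hU' (by simp) hs)]
  exact (LinearMap.range_comp_le_range _ _).trans (hspan (φ s) hsV)

theorem comp_left {W W' : Set (EuclideanSpace ℝ (Fin m))}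
    {Φ Ψ : EuclideanSpace ℝ (Fin m) → EuclideanSpace ℝ (Fin m)} {a : EuclideanSpace ℝ (Fin n)}
    (hfront : IsFrontalAt n m U f a) (hU : IsOpen U) (hW : IsOpen W) (hW' : IsOpen W')
    (hf : ContDiffOn ℝ (⊤ : ℕ∞) f U) (hfW : MapsTo f U W)
    (hΦ : ContDiffOn ℝ (⊤ : ℕ∞) Φ W) (hΨ : ContDiffOn ℝ (⊤ : ℕ∞) Ψ W')
    (hΦW : MapsTo Φ W W') (hΨΦ : ∀ x ∈ W, Ψ (Φ x) = x) :
    IsFrontalAt n m U (fun t => Φ (f t)) a := by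
  obtain ⟨V, hV, haV, hVU, h, hh, hli, hspan⟩ := hfront
  have hdΦ : ContDiffOn ℝ (⊤ : ℕ∞) (fderiv ℝ Φ) W :=
    hΦ.fderiv_of_isOpen hW (by exact_mod_cast le_top)
  have hinj : ∀ t ∈ U, Function.Injective (fderiv ℝ Φ (f t)) := fun t ht =>
    injective_fderiv_of_eventually_leftInverse
      (hΦ.differentiableAt_of_isOpen hW (by simp) (hfW ht))
      (hΨ.differentiableAt_of_isOpen hW' (by simp) (hΦW (hfW ht)))
      (eventually_of_mem (hW.mem_nhds (hfW ht)) hΨΦ)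
  refine ⟨V, hV, haV, hVU, fun i t => fderiv ℝ Φ (f t) (h i t),
    fun i => (hdΦ.comp (hf.mono hVU) fun _ ht => hfW (hVU ht)).clm_apply (hh i),
    fun t ht => (hli t ht).map' _ (LinearMap.ker_eq_bot.mpr (hinj t (hVU ht))),
    fun t ht => ?_⟩
  rw [fderiv_fun_comp t (hΦ.differentiableAt_of_isOpen hW (by simp) (hfW (hVU ht)))
    (hf.differentiableAt_of_isOpen hU (by simp) (hVU ht))]
  have := LinearMap.range_comp_le_span_image (fderiv ℝ Φ (f t)).toLinearMap _ (hspan t ht)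
  rwa [← Set.range_comp] at this

end IsFrontalAt

theorem isFrontalAt_comp_diffeos_general
    (n m : ℕ)
    (U U' : Set (EuclideanSpace ℝ (Fin n))) (hU : IsOpen U) (hU' : IsOpen U')
    (W W' : Set (EuclideanSpace ℝ (Fin m))) (hW : IsOpen W) (hW' : IsOpen W')
    (f : EuclideanSpace ℝ (Fin n) → EuclideanSpace ℝ (Fin m))
    (hf : ContDiffOn ℝ (⊤ : ℕ∞) f U) (hfW : Set.MapsTo f U W)
    (φ : EuclideanSpace ℝ (Fin n) → EuclideanSpace ℝ (Fin n))
    (hφ : ContDiffOn ℝ (⊤ : ℕ∞) φ U')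
    (hφU : Set.MapsTo φ U' U)
    (Φ Ψ : EuclideanSpace ℝ (Fin m) → EuclideanSpace ℝ (Fin m))
    (hΦ : ContDiffOn ℝ (⊤ : ℕ∞) Φ W) (hΨ : ContDiffOn ℝ (⊤ : ℕ∞) Ψ W')
    (hΦW : Set.MapsTo Φ W W')
    (hΨΦ : ∀ x ∈ W, Ψ (Φ x) = x)
    (a a' : EuclideanSpace ℝ (Fin n)) (ha' : a' ∈ U') (haa' : φ a' = a)
    (hfront : IsFrontalAt n m U f a) :
    IsFrontalAt n m U' (fun s => Φ (f (φ s))) a' := by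
  subst haa'
  exact (hfront.comp_right hU hU' hf hφ ha').comp_left hU' hW hW'
    (hf.comp hφ hφU) (hfW.comp hφU) hΦ hΨ hΦW hΨΦ

/-- Being a frontal is invariant under right-left (`𝒜`-) equivalence:
if `f : U → ℝ^m` is `C^∞` with `f (U) ⊆ W`, `f` is a frontal at `a ∈ U`,
`φ : U' → U` is a `C^∞` diffeomorphism (with smooth inverse `ψ`) and `Φ : W → W'` is a
`C^∞` diffeomorphism (with smooth inverse `Ψ`), then `g = Φ ∘ f ∘ φ` is a frontal at
`a' = φ⁻¹ a`.  (Proposition 4.2 of the paper.) -/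
theorem isFrontalAt_comp_diffeos
    (n m : ℕ) (hnm : n ≤ m)
    (U U' : Set (EuclideanSpace ℝ (Fin n))) (hU : IsOpen U) (hU' : IsOpen U')
    (W W' : Set (EuclideanSpace ℝ (Fin m))) (hW : IsOpen W) (hW' : IsOpen W')
    (f : EuclideanSpace ℝ (Fin n) → EuclideanSpace ℝ (Fin m))
    (hf : ContDiffOn ℝ (⊤ : ℕ∞) f U) (hfW : Set.MapsTo f U W)
    (φ ψ : EuclideanSpace ℝ (Fin n) → EuclideanSpace ℝ (Fin n))
    (hφ : ContDiffOn ℝ (⊤ : ℕ∞) φ U') (hψ : ContDiffOn ℝ (⊤ : ℕ∞) ψ U)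
    (hφU : Set.MapsTo φ U' U) (hψU : Set.MapsTo ψ U U')
    (hψφ : ∀ s ∈ U', ψ (φ s) = s) (hφψ : ∀ t ∈ U, φ (ψ t) = t)
    (Φ Ψ : EuclideanSpace ℝ (Fin m) → EuclideanSpace ℝ (Fin m))
    (hΦ : ContDiffOn ℝ (⊤ : ℕ∞) Φ W) (hΨ : ContDiffOn ℝ (⊤ : ℕ∞) Ψ W')
    (hΦW : Set.MapsTo Φ W W') (hΨW : Set.MapsTo Ψ W' W)
    (hΨΦ : ∀ x ∈ W, Ψ (Φ x) = x) (hΦΨ : ∀ y ∈ W', Φ (Ψ y) = y)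
    (a a' : EuclideanSpace ℝ (Fin n)) (ha : a ∈ U) (ha' : a' ∈ U') (haa' : φ a' = a)
    (hfront : IsFrontalAt n m U f a) :
    IsFrontalAt n m U' (fun s => Φ (f (φ s))) a' :=
  isFrontalAt_comp_diffeos_general n m U U' hU hU' W W' hW hW' f hf hfW φ hφ hφU Φ Ψ hΦ hΨ hΦW hΨΦ a
    a' ha' haa' hfront

end
end

section
/- Let U ⊆ ℝⁿ be open, n ≤ m, and f : U → ℝ^m a C^∞ map whose regular locus R(f) = {t ∈ U : fderiv ℝ f t is injective} is dense in U. Let h₁, …, h_n : U → ℝ^m and k₁, …, k_n : U → ℝ^m be smooth maps which are linearly independent at every point of U and satisfy range(fderiv ℝ f t) ⊆ span{h₁(t), …, h_n(t)} and range(fderiv ℝ f t) ⊆ span{k₁(t), …, k_n(t)} for every t ∈ U. Then span{h₁(t), …, h_n(t)} = span{k₁(t), …, k_n(t)} for every t ∈ U. (Uniqueness of the Legendre lift of a proper frontal.) -/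
/-!
On the regular locus the range of the derivative is `n`-dimensional, so it coincides with both
`n`-dimensional spans containing it. Away from the regular locus, use that linear independence is
an open condition: if `k j t` were outside the span of the independent frame `h · t`, the
enlarged frame would stay independent near `t`, hence at some regular point, which is impossible.
-/

open Filter Topology Module

theorem LinearMap.range_eq_span_of_injective {K E F ι : Type*} [Field K] [AddCommGroup E]
    [Module K E] [FiniteDimensional K E] [AddCommGroup F] [Module K F] [Fintype ι]
    {φ : E →ₗ[K] F} (hφ : Function.Injective φ) {v : ι → F} (hv : LinearIndependent K v)
    (hcard : Fintype.card ι ≤ finrank K E) (hle : range φ ≤ Submodule.span K (Set.range v)) :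
    range φ = Submodule.span K (Set.range v) :=
  haveI := FiniteDimensional.span_of_finite K (Set.finite_range v)
  Submodule.eq_of_le_of_finrank_le hle <| by
    rwa [finrank_span_eq_card hv, LinearMap.finrank_range_of_inj hφ]

section Continuity

variable {𝕜 X E ι : Type*} [NontriviallyNormedField 𝕜] [CompleteSpace 𝕜] [TopologicalSpace X]
  [NormedAddCommGroup E] [NormedSpace 𝕜 E] [Finite ι]

theorem ContinuousAt.eventually_linearIndependent {v : ι → X → E} {t : X}
    (hv : ∀ i, ContinuousAt (v i) t) (hli : LinearIndependent 𝕜 fun i => v i t) :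
    ∀ᶠ s in 𝓝 t, LinearIndependent 𝕜 fun i => v i s :=
  (continuousAt_pi.2 hv).eventually hli.eventually

theorem mem_span_of_subset_closure {U S : Set X} (hU : IsOpen U) (hS : U ⊆ closure S)
    {v : ι → X → E} {w : X → E} (hv : ∀ i, ContinuousOn (v i) U) (hw : ContinuousOn w U)
    (hli : ∀ t ∈ U, LinearIndependent 𝕜 fun i => v i t)
    (hmem : ∀ s ∈ S, w s ∈ Submodule.span 𝕜 (Set.range fun i => v i s)) :
    ∀ t ∈ U, w t ∈ Submodule.span 𝕜 (Set.range fun i => v i t) := by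
  intro t ht
  by_contra hnot
  let u : Option ι → X → E := fun o s => Option.casesOn' o (w s) fun i => v i s
  have hut : LinearIndependent 𝕜 fun o => u o t := linearIndependent_option'.2 ⟨hli t ht, hnot⟩
  have hcont : ∀ o, ContinuousAt (u o) t := by
    rintro (_ | i)
    · exact hw.continuousAt (hU.mem_nhds ht)
    · exact (hv i).continuousAt (hU.mem_nhds ht)
  obtain ⟨s, hsS, hsu⟩ :=
    ((mem_closure_iff_frequently.1 (hS ht)).and_eventually
      (ContinuousAt.eventually_linearIndependent hcont hut)).exists
  exact (linearIndependent_option'.1 hsu).2 (hmem s hsS)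

theorem span_le_of_subset_closure {ι' : Type*} {U S : Set X} (hU : IsOpen U) (hS : U ⊆ closure S)
    {v : ι → X → E} {w : ι' → X → E} (hv : ∀ i, ContinuousOn (v i) U)
    (hw : ∀ j, ContinuousOn (w j) U) (hli : ∀ t ∈ U, LinearIndependent 𝕜 fun i => v i t)
    (hle : ∀ s ∈ S, Submodule.span 𝕜 (Set.range fun j => w j s)
      ≤ Submodule.span 𝕜 (Set.range fun i => v i s)) :
    ∀ t ∈ U, Submodule.span 𝕜 (Set.range fun j => w j t)
      ≤ Submodule.span 𝕜 (Set.range fun i => v i t) := by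
  intro t ht
  refine Submodule.span_le.2 ?_
  rintro _ ⟨j, rfl⟩
  exact mem_span_of_subset_closure hU hS hv (hw j) hli
    (fun s hs => hle s hs (Submodule.subset_span ⟨j, rfl⟩)) t ht

end Continuity

theorem legendre_lift_unique_of_dense_regular_locus_general
    (n m : ℕ)
    (U : Set (EuclideanSpace ℝ (Fin n))) (hU : IsOpen U)
    (f : EuclideanSpace ℝ (Fin n) → EuclideanSpace ℝ (Fin m))
    (hdense : U ⊆ closure {t ∈ U | Function.Injective (fderiv ℝ f t)})
    (h k : Fin n → EuclideanSpace ℝ (Fin n) → EuclideanSpace ℝ (Fin m))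
    (hh : ∀ i, ContDiffOn ℝ (⊤ : ℕ∞) (h i) U)
    (hk : ∀ i, ContDiffOn ℝ (⊤ : ℕ∞) (k i) U)
    (hhli : ∀ t ∈ U, LinearIndependent ℝ (fun i => h i t))
    (hkli : ∀ t ∈ U, LinearIndependent ℝ (fun i => k i t))
    (hhspan : ∀ t ∈ U, LinearMap.range
        (fderiv ℝ f t : EuclideanSpace ℝ (Fin n) →ₗ[ℝ] EuclideanSpace ℝ (Fin m)) ≤
      Submodule.span ℝ (Set.range fun i => h i t))
    (hkspan : ∀ t ∈ U, LinearMap.range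
        (fderiv ℝ f t : EuclideanSpace ℝ (Fin n) →ₗ[ℝ] EuclideanSpace ℝ (Fin m)) ≤
      Submodule.span ℝ (Set.range fun i => k i t)) :
    ∀ t ∈ U, Submodule.span ℝ (Set.range fun i => h i t)
      = Submodule.span ℝ (Set.range fun i => k i t) := by
  set S := {t ∈ U | Function.Injective (fderiv ℝ f t)}
  have hregular : ∀ s ∈ S, Submodule.span ℝ (Set.range fun i => h i s)
      = Submodule.span ℝ (Set.range fun i => k i s) := by
    intro s hs
    have hcard : Fintype.card (Fin n) ≤ finrank ℝ (EuclideanSpace ℝ (Fin n)) := by simp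
    rw [← LinearMap.range_eq_span_of_injective hs.2 (hhli s hs.1) hcard (hhspan s hs.1),
      ← LinearMap.range_eq_span_of_injective hs.2 (hkli s hs.1) hcard (hkspan s hs.1)]
  intro t ht
  exact le_antisymm
    (span_le_of_subset_closure hU hdense (fun i => (hk i).continuousOn)
      (fun i => (hh i).continuousOn) hkli (fun s hs => (hregular s hs).le) t ht)
    (span_le_of_subset_closure hU hdense (fun i => (hh i).continuousOn)
      (fun i => (hk i).continuousOn) hhli (fun s hs => (hregular s hs).ge) t ht)

/-- Uniqueness of the Legendre lift of a proper frontal.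
Let `U ⊆ ℝⁿ` be open, `n ≤ m`, `f : U → ℝ^m` a `C^∞` map whose regular locus
`R(f) = {t ∈ U : fderiv ℝ f t is injective}` is dense in `U`.  If `(h₁, …, h_n)` and
`(k₁, …, k_n)` are smooth, pointwise linearly independent frames on `U` whose pointwise
spans both contain the range of `fderiv ℝ f t` for every `t ∈ U`, then
`span{h₁(t), …, h_n(t)} = span{k₁(t), …, k_n(t)}` for every `t ∈ U`.
(Uniqueness part of Proposition 6.2 of the paper.) -/
theorem legendre_lift_unique_of_dense_regular_locus
    (n m : ℕ) (hnm : n ≤ m)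
    (U : Set (EuclideanSpace ℝ (Fin n))) (hU : IsOpen U)
    (f : EuclideanSpace ℝ (Fin n) → EuclideanSpace ℝ (Fin m))
    (hf : ContDiffOn ℝ (⊤ : ℕ∞) f U)
    (hdense : U ⊆ closure {t ∈ U | Function.Injective (fderiv ℝ f t)})
    (h k : Fin n → EuclideanSpace ℝ (Fin n) → EuclideanSpace ℝ (Fin m))
    (hh : ∀ i, ContDiffOn ℝ (⊤ : ℕ∞) (h i) U)
    (hk : ∀ i, ContDiffOn ℝ (⊤ : ℕ∞) (k i) U)
    (hhli : ∀ t ∈ U, LinearIndependent ℝ (fun i => h i t))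
    (hkli : ∀ t ∈ U, LinearIndependent ℝ (fun i => k i t))
    (hhspan : ∀ t ∈ U, LinearMap.range
        (fderiv ℝ f t : EuclideanSpace ℝ (Fin n) →ₗ[ℝ] EuclideanSpace ℝ (Fin m)) ≤
      Submodule.span ℝ (Set.range fun i => h i t))
    (hkspan : ∀ t ∈ U, LinearMap.range
        (fderiv ℝ f t : EuclideanSpace ℝ (Fin n) →ₗ[ℝ] EuclideanSpace ℝ (Fin m)) ≤
      Submodule.span ℝ (Set.range fun i => k i t)) :
    ∀ t ∈ U, Submodule.span ℝ (Set.range fun i => h i t)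
      = Submodule.span ℝ (Set.range fun i => k i t) :=
  legendre_lift_unique_of_dense_regular_locus_general n m U hU f hdense h k hh hk hhli hkli hhspan
    hkspan
end

section
/- Let U ⊆ ℝⁿ be open (n ≥ 1), n ≤ m, f : U → ℝ^m a C^∞ map, a ∈ U, and let h₁, …, h_n : U → ℝ^m be smooth maps which are linearly independent at every point with range(fderiv ℝ f t) ⊆ span{h₁(t), …, h_n(t)} for all t ∈ U (so f is a frontal with frame (h₁, …, h_n)). Let σ : U → ℝ be a signed area density function of f relative to this frame, and suppose the singular point a is non-degenerate, i.e. σ(a) = 0 and fderiv ℝ σ a ≠ 0. Then f has corank one at a; that is, the rank of fderiv ℝ f a equals n − 1. -/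
/-!
Write `D t = (∂₁f(t), …, ∂ₙf(t))`. Since `σ(a) = 0`, the wedge of `D a` vanishes, so the partials
are linearly dependent at `a` and the rank is at most `n - 1`. For the converse choose a linear
functional `L` on the exterior algebra with `L(h₁(a) ∧ ⋯ ∧ hₙ(a)) = 1`. Near `a`,
`L(∂₁f ∧ ⋯ ∧ ∂ₙf) = σ · L(h₁ ∧ ⋯ ∧ hₙ)`, whose derivative at `a` is `dσ(a) ≠ 0`. If the rank were
at most `n - 2`, every term of the Leibniz expansion of the left-hand side's derivative would be
a wedge of `n` vectors, `n - 1` of which lie in the image of `df(a)`, so it would vanish.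
-/

open Module ExteriorAlgebra

theorem LinearIndependent.exists_linearMap_ιMulti_eq_one {K V : Type*} [Field K]
    [AddCommGroup V] [Module K V] {n : ℕ} {v : Fin n → V} (hv : LinearIndependent K v) :
    ∃ L : ExteriorAlgebra K V →ₗ[K] K, L (ιMulti K n v) = 1 := by
  set p := Submodule.span K (Set.range v)
  obtain ⟨P, hP⟩ := p.subtype.exists_leftInverse_of_injective p.ker_subtype
  have hPv : ∀ i, P (v i) = Basis.span hv i := fun i => by
    simpa [Basis.span_apply] using LinearMap.congr_fun hP (Basis.span hv i)
  refine ⟨liftAlternating (Pi.single n ((Basis.span hv).det.compLinearMap P)), ?_⟩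
  rw [liftAlternating_apply_ιMulti, Pi.single_eq_same, AlternatingMap.compLinearMap_apply]
  simp only [hPv]
  exact Basis.det_self _

theorem MultilinearMap.continuous_of_finiteDimensional {𝕜 ι G : Type*} {E : ι → Type*}
    [NontriviallyNormedField 𝕜] [CompleteSpace 𝕜] [Fintype ι] [∀ i, NormedAddCommGroup (E i)]
    [∀ i, NormedSpace 𝕜 (E i)] [∀ i, FiniteDimensional 𝕜 (E i)]
    [NormedAddCommGroup G] [NormedSpace 𝕜 G] (f : MultilinearMap 𝕜 E G) : Continuous f := by
  classical
  let b := fun i => Module.finBasis 𝕜 (E i)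
  have hexpand : ⇑f = fun v => ∑ r : ∀ i, Fin (finrank 𝕜 (E i)),
      (∏ i, (b i).equivFun (v i) (r i)) • f (fun i => b i (r i)) := by
    ext v
    conv_lhs => rw [show v = fun i => ∑ j, (b i).equivFun (v i) j • b i j from
      funext fun i => ((b i).sum_equivFun (v i)).symm]
    simp only [f.map_sum, f.map_smul_univ]
  rw [hexpand]
  refine continuous_finsetSum _ fun r _ => Continuous.smul ?_ continuous_const
  exact continuous_finsetProd _ fun i _ => (continuous_apply (r i)).comp
    ((b i).equivFun.toLinearMap.continuous_of_finiteDimensional.comp (continuous_apply i))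

theorem ContinuousMultilinearMap.hasFDerivAt_comp_eq_zero_of_map_update_eq_zero
    {𝕜 ι E G : Type*} {F : ι → Type*} [NontriviallyNormedField 𝕜] [Fintype ι]
    [DecidableEq ι] [∀ i, NormedAddCommGroup (F i)] [∀ i, NormedSpace 𝕜 (F i)]
    [NormedAddCommGroup E] [NormedSpace 𝕜 E] [NormedAddCommGroup G] [NormedSpace 𝕜 G]
    (M : ContinuousMultilinearMap 𝕜 F G) {g : ∀ i, E → F i} {x : E}
    (hg : ∀ i, DifferentiableAt 𝕜 (g i) x)
    (hM : ∀ i z, M (Function.update (fun j => g j x) i z) = 0) :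
    HasFDerivAt (fun t => M (fun i => g i t)) (0 : E →L[𝕜] G) x := by
  refine (HasFDerivAt.multilinear_comp M fun i => (hg i).hasFDerivAt).congr_fderiv ?_
  ext v
  simp [hM]

theorem AlternatingMap.map_update_eq_zero_of_finrank_lt {K V N ι : Type*} [Field K]
    [AddCommGroup V] [Module K V] [AddCommGroup N] [Module K N] [Fintype ι] [DecidableEq ι]
    (A : V [⋀^ι]→ₗ[K] N) {p : Submodule K V} [FiniteDimensional K p] {v : ι → V}
    (hv : ∀ j, v j ∈ p) (hp : finrank K p + 1 < Fintype.card ι) (i : ι) (z : V) :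
    A (Function.update v i z) = 0 := by
  refine A.map_linearDependent _ fun hli => ?_
  have hrest : LinearIndependent K fun j : {j // j ≠ i} => v j := by
    have hupd : Function.update v i z ∘ Subtype.val = fun j : {j // j ≠ i} => v j :=
      funext fun j => Function.update_of_ne j.2 _ _
    exact hupd ▸ hli.comp Subtype.val Subtype.val_injective
  have hle : Fintype.card {j // j ≠ i} ≤ finrank K p := by
    rw [← finrank_span_eq_card hrest]
    exact Submodule.finrank_mono (Submodule.span_le.2 (Set.range_subset_iff.2 fun j => hv j))
  simp only [ne_eq, Fintype.card_subtype_compl, Fintype.card_subtype_eq] at hle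
  omega

theorem LinearMap.finrank_range_lt_of_ιMulti_eq_zero {K V W : Type*} [Field K]
    [AddCommGroup V] [Module K V] [FiniteDimensional K V] [AddCommGroup W] [Module K W]
    {n : ℕ} (φ : V →ₗ[K] W) (b : Basis (Fin n) K V) (hφ : ιMulti K n (φ ∘ b) = 0) :
    finrank K (range φ) < n := by
  by_contra! hle
  have hker : ker φ = ⊥ := by
    have := φ.finrank_range_add_finrank_ker
    rw [finrank_eq_card_basis b, Fintype.card_fin] at this
    exact Submodule.finrank_eq_zero.1 (by omega)
  obtain ⟨L, hL⟩ := (b.linearIndependent.map' φ hker).exists_linearMap_ιMulti_eq_one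
  rw [hφ, map_zero] at hL
  exact zero_ne_one hL

theorem DifferentiableAt.hasFDerivAt_mul_of_eq_zero_left {𝕜 E : Type*}
    [NontriviallyNormedField 𝕜] [NormedAddCommGroup E] [NormedSpace 𝕜 E] {f g : E → 𝕜} {x : E}
    (hf : DifferentiableAt 𝕜 f x) (hg : DifferentiableAt 𝕜 g x) (hfx : f x = 0) :
    HasFDerivAt (fun t => f t * g t) (g x • fderiv 𝕜 f x) x := by
  refine (hf.hasFDerivAt.fun_mul hg.hasFDerivAt).congr_fderiv ?_
  ext v
  simp [hfx]

theorem rank_eq_of_nondegenerate_singular_point_general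
    (n m : ℕ)
    (U : Set (EuclideanSpace ℝ (Fin n))) (hU : IsOpen U)
    (a : EuclideanSpace ℝ (Fin n)) (ha : a ∈ U)
    (f : EuclideanSpace ℝ (Fin n) → EuclideanSpace ℝ (Fin m))
    (hf : ContDiffOn ℝ (⊤ : ℕ∞) f U)
    (h : Fin n → EuclideanSpace ℝ (Fin n) → EuclideanSpace ℝ (Fin m))
    (hh : ∀ i, ContDiffOn ℝ (⊤ : ℕ∞) (h i) U)
    (hhli : ∀ t ∈ U, LinearIndependent ℝ (fun i => h i t))
    (σ : EuclideanSpace ℝ (Fin n) → ℝ) (hσ : ContDiffOn ℝ (⊤ : ℕ∞) σ U)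
    (hσdens : ∀ t ∈ U,
      ExteriorAlgebra.ιMulti ℝ n
          (fun i => fderiv ℝ f t (EuclideanSpace.single i (1 : ℝ)))
        = σ t • ExteriorAlgebra.ιMulti ℝ n (fun i => h i t))
    (hσa : σ a = 0) (hdσa : fderiv ℝ σ a ≠ 0) :
    Module.finrank ℝ (LinearMap.range
      (fderiv ℝ f a : EuclideanSpace ℝ (Fin n) →ₗ[ℝ] EuclideanSpace ℝ (Fin m))) = n - 1 := by
  classical
  set b := (EuclideanSpace.basisFun (Fin n) ℝ).toBasis
  set D := fun t i => fderiv ℝ f t (b i)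
  have hD : ∀ t ∈ U, ιMulti ℝ n (D t) = σ t • ιMulti ℝ n (h · t) := by
    simpa [D, b] using hσdens
  apply le_antisymm
  · apply Nat.le_sub_one_of_lt
    refine (fderiv ℝ f a).toLinearMap.finrank_range_lt_of_ιMulti_eq_zero b ?_
    exact (hD a ha).trans (by rw [hσa, zero_smul])
  by_contra! hlt
  have hUa := hU.mem_nhds ha
  obtain ⟨L, hL⟩ := (hhli a ha).exists_linearMap_ιMulti_eq_one
  let M : ContinuousMultilinearMap ℝ (fun _ : Fin n => EuclideanSpace ℝ (Fin m)) ℝ :=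
    ⟨(L.compAlternatingMap (ιMulti ℝ n)).toMultilinearMap,
      MultilinearMap.continuous_of_finiteDimensional _⟩
  have hD_diff : ∀ i, DifferentiableAt ℝ (D · i) a := by
    have hdf := (hf.contDiffAt hUa).fderiv_right (m := (1 : ℕ∞)) (by exact_mod_cast le_top)
    exact fun i => (hdf.differentiableAt one_ne_zero).clm_apply (differentiableAt_const _)
  have hc_diff : DifferentiableAt ℝ (fun t => M (h · t)) a :=
    (HasFDerivAt.multilinear_comp M fun i =>
      (((hh i).contDiffAt hUa).differentiableAt (by simp)).hasFDerivAt).differentiableAt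
  have hzero : HasFDerivAt (fun t => M (D t)) 0 a :=
    M.hasFDerivAt_comp_eq_zero_of_map_update_eq_zero hD_diff fun i z =>
      (L.compAlternatingMap (ιMulti ℝ n)).map_update_eq_zero_of_finrank_lt
        (fun j => LinearMap.mem_range_self _ (b j)) (by rw [Fintype.card_fin]; omega) i z
  have hprod : HasFDerivAt (fun t => M (D t)) (M (h · a) • fderiv ℝ σ a) a := by
    refine (((hσ.contDiffAt hUa).differentiableAt (by simp)).hasFDerivAt_mul_of_eq_zero_left
      hc_diff hσa).congr_of_eventuallyEq ?_
    filter_upwards [hUa] with t ht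
    exact (congrArg L (hD t ht)).trans (L.map_smul _ _)
  rw [show M (h · a) = 1 from hL, one_smul] at hprod
  exact hdσa (hprod.unique hzero)

/-- A frontal has corank one at a non-degenerate singular point.
Let `U ⊆ ℝⁿ` be open (`n ≥ 1`, `n ≤ m`), `f : U → ℝ^m` a `C^∞` map, `(h₁, …, h_n)` a
smooth, pointwise linearly independent frame with `range (fderiv ℝ f t) ⊆ span{hᵢ(t)}`
on `U`, and `σ` a signed area density function of `f` relative to this frame.  If the
singular point `a` is non-degenerate (`σ a = 0` and `fderiv ℝ σ a ≠ 0`), then the rank of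
`fderiv ℝ f a` equals `n - 1`.  (Lemma 6.6 of the paper.) -/
theorem rank_eq_of_nondegenerate_singular_point
    (n m : ℕ) (hn : 1 ≤ n) (hnm : n ≤ m)
    (U : Set (EuclideanSpace ℝ (Fin n))) (hU : IsOpen U)
    (a : EuclideanSpace ℝ (Fin n)) (ha : a ∈ U)
    (f : EuclideanSpace ℝ (Fin n) → EuclideanSpace ℝ (Fin m))
    (hf : ContDiffOn ℝ (⊤ : ℕ∞) f U)
    (h : Fin n → EuclideanSpace ℝ (Fin n) → EuclideanSpace ℝ (Fin m))
    (hh : ∀ i, ContDiffOn ℝ (⊤ : ℕ∞) (h i) U)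
    (hhli : ∀ t ∈ U, LinearIndependent ℝ (fun i => h i t))
    (hhspan : ∀ t ∈ U, LinearMap.range
        (fderiv ℝ f t : EuclideanSpace ℝ (Fin n) →ₗ[ℝ] EuclideanSpace ℝ (Fin m)) ≤
      Submodule.span ℝ (Set.range fun i => h i t))
    (σ : EuclideanSpace ℝ (Fin n) → ℝ) (hσ : ContDiffOn ℝ (⊤ : ℕ∞) σ U)
    (hσdens : ∀ t ∈ U,
      ExteriorAlgebra.ιMulti ℝ n
          (fun i => fderiv ℝ f t (EuclideanSpace.single i (1 : ℝ)))
        = σ t • ExteriorAlgebra.ιMulti ℝ n (fun i => h i t))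
    (hσa : σ a = 0) (hdσa : fderiv ℝ σ a ≠ 0) :
    Module.finrank ℝ (LinearMap.range
      (fderiv ℝ f a : EuclideanSpace ℝ (Fin n) →ₗ[ℝ] EuclideanSpace ℝ (Fin m))) = n - 1 :=
  rank_eq_of_nondegenerate_singular_point_general n m U hU a ha f hf h hh hhli σ hσ hσdens hσa hdσa
end

section
/- Let U ⊆ ℝⁿ be open, a ∈ U, and f = (f₁, …, f_m) : U → ℝ^m a C^∞ map. Suppose h : U → ℝ is smooth and there exist an open neighbourhood W ⊆ U of a and smooth functions p₁, …, p_m : W → ℝ such that fderiv ℝ h t = Σⱼ pⱼ(t) • fderiv ℝ fⱼ t for all t ∈ W (i.e. dh lies in the Jacobi module 𝒥_f = ℰ·{df₁, …, df_m} near a, so h ∈ ℛ_f). Then for every C^∞ function k : ℝ^m → ℝ there exist an open neighbourhood W' of a and smooth functions q₁, …, q_m : W' → ℝ such that fderiv ℝ ((k ∘ f) · h) t = Σⱼ qⱼ(t) • fderiv ℝ fⱼ t for all t ∈ W'. In other words, the ramification module ℛ_f is closed under multiplication by functions pulled back from the target, i.e. ℛ_f is a module over the target function ring via f*. -/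
/-!
By the product rule, `d((k ∘ f) h) = (k ∘ f) dh + h d(k ∘ f)`. The first term lies in the Jacobi
module `𝒥_f` because `dh` does, and the chain rule gives `d(k ∘ f) = Σⱼ (∂ⱼk ∘ f) dfⱼ`, so the
second does too; `𝒥_f` is closed under sums and under multiplication by smooth functions.
-/

theorem EuclideanSpace.eq_sum_apply_single_smul_proj {ι : Type*} [Fintype ι] [DecidableEq ι]
    (L : EuclideanSpace ℝ ι →L[ℝ] ℝ) :
    L = ∑ j, L (EuclideanSpace.single j 1) • EuclideanSpace.proj j := by
  ext v
  conv_lhs => rw [← (EuclideanSpace.basisFun ι ℝ).sum_repr v]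
  simp [mul_comm]

section

variable {E ι : Type*} [NormedAddCommGroup E] [NormedSpace ℝ E] [Fintype ι]

theorem fderiv_euclideanSpace_apply {f : E → EuclideanSpace ℝ ι} {t : E}
    (hf : DifferentiableAt ℝ f t) (j : ι) :
    fderiv ℝ (fun s => f s j) t = EuclideanSpace.proj j ∘L fderiv ℝ f t :=
  ((PiLp.hasFDerivAt_apply 2 (f t) j).comp (g := fun x : EuclideanSpace ℝ ι => x j) t
    hf.hasFDerivAt).fderiv

theorem fderiv_comp_eq_sum_smul_fderiv_apply [DecidableEq ι] {f : E → EuclideanSpace ℝ ι}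
    {k : EuclideanSpace ℝ ι → ℝ} {t : E} (hk : DifferentiableAt ℝ k (f t))
    (hf : DifferentiableAt ℝ f t) :
    fderiv ℝ (fun s => k (f s)) t
      = ∑ j, fderiv ℝ k (f t) (EuclideanSpace.single j 1) • fderiv ℝ (fun s => f s j) t := by
  conv_lhs => rw [fderiv_fun_comp t hk hf,
    EuclideanSpace.eq_sum_apply_single_smul_proj (fderiv ℝ k (f t))]
  simp only [ContinuousLinearMap.finsetSum_comp, ContinuousLinearMap.smul_comp,
    fderiv_euclideanSpace_apply hf]

/-- Membership of the 1-form field `ω` in the Jacobi module `𝒥_f`, on the set `W`. -/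
def IsJacobiCombinationOn (f : E → EuclideanSpace ℝ ι) (W : Set E) (ω : E → E →L[ℝ] ℝ) : Prop :=
  ∃ q : ι → E → ℝ, (∀ j, ContDiffOn ℝ (⊤ : ℕ∞) (q j) W) ∧
    ∀ t ∈ W, ω t = ∑ j, q j t • fderiv ℝ (fun s => f s j) t

namespace IsJacobiCombinationOn

variable {f : E → EuclideanSpace ℝ ι} {W : Set E} {ω η : E → E →L[ℝ] ℝ}

theorem add (hω : IsJacobiCombinationOn f W ω) (hη : IsJacobiCombinationOn f W η) :
    IsJacobiCombinationOn f W fun t => ω t + η t := by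
  obtain ⟨p, hp, hpω⟩ := hω
  obtain ⟨q, hq, hqη⟩ := hη
  refine ⟨p + q, fun j => (hp j).add (hq j), fun t ht => ?_⟩
  simp only [Pi.add_apply, hpω t ht, hqη t ht, add_smul, Finset.sum_add_distrib]

theorem smul {g : E → ℝ} (hg : ContDiffOn ℝ (⊤ : ℕ∞) g W) (hω : IsJacobiCombinationOn f W ω) :
    IsJacobiCombinationOn f W fun t => g t • ω t := by
  obtain ⟨p, hp, hpω⟩ := hω
  refine ⟨fun j => g * p j, fun j => hg.mul (hp j), fun t ht => ?_⟩
  simp only [Pi.mul_apply, hpω t ht, Finset.smul_sum, smul_smul]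

theorem congr (hω : IsJacobiCombinationOn f W ω) (h : ∀ t ∈ W, η t = ω t) :
    IsJacobiCombinationOn f W η := by
  obtain ⟨p, hp, hpω⟩ := hω
  exact ⟨p, hp, fun t ht => (h t ht).trans (hpω t ht)⟩

end IsJacobiCombinationOn

theorem isJacobiCombinationOn_fderiv_comp {f : E → EuclideanSpace ℝ ι} {W : Set E}
    (hW : IsOpen W) (hf : ContDiffOn ℝ (⊤ : ℕ∞) f W) {k : EuclideanSpace ℝ ι → ℝ}
    (hk : ContDiff ℝ (⊤ : ℕ∞) k) :
    IsJacobiCombinationOn f W (fderiv ℝ fun s => k (f s)) := by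
  classical
  have hdk : ContDiff ℝ (⊤ : ℕ∞) (fderiv ℝ k) := hk.fderiv_right (by exact_mod_cast le_top)
  refine ⟨fun j t => fderiv ℝ k (f t) (EuclideanSpace.single j 1),
    fun j => (hdk.comp_contDiffOn hf).clm_apply contDiffOn_const, fun t ht => ?_⟩
  exact fderiv_comp_eq_sum_smul_fderiv_apply (hk.differentiable (by simp) _)
    ((hf.differentiableOn (by simp)).differentiableAt (hW.mem_nhds ht))

end

theorem ramification_module_closed_under_pullback_mul_general
    (n m : ℕ) (U : Set (EuclideanSpace ℝ (Fin n)))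
    (a : EuclideanSpace ℝ (Fin n))
    (f : EuclideanSpace ℝ (Fin n) → EuclideanSpace ℝ (Fin m))
    (hf : ContDiffOn ℝ (⊤ : ℕ∞) f U)
    (h : EuclideanSpace ℝ (Fin n) → ℝ) (hh : ContDiffOn ℝ (⊤ : ℕ∞) h U)
    (W : Set (EuclideanSpace ℝ (Fin n))) (hW : IsOpen W) (haW : a ∈ W) (hWU : W ⊆ U)
    (p : Fin m → EuclideanSpace ℝ (Fin n) → ℝ)
    (hp : ∀ j, ContDiffOn ℝ (⊤ : ℕ∞) (p j) W)
    (hdh : ∀ t ∈ W, fderiv ℝ h t = ∑ j, p j t • fderiv ℝ (fun s => f s j) t)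
    (k : EuclideanSpace ℝ (Fin m) → ℝ) (hk : ContDiff ℝ (⊤ : ℕ∞) k) :
    ∃ W' : Set (EuclideanSpace ℝ (Fin n)), IsOpen W' ∧ a ∈ W' ∧ W' ⊆ U ∧
      ∃ q : Fin m → EuclideanSpace ℝ (Fin n) → ℝ,
        (∀ j, ContDiffOn ℝ (⊤ : ℕ∞) (q j) W') ∧
        ∀ t ∈ W', fderiv ℝ (fun s => k (f s) * h s) t
          = ∑ j, q j t • fderiv ℝ (fun s => f s j) t := by
  refine ⟨W, hW, haW, hWU, ?_⟩
  have hfW : ContDiffOn ℝ (⊤ : ℕ∞) f W := hf.mono hWU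
  have hhW : ContDiffOn ℝ (⊤ : ℕ∞) h W := hh.mono hWU
  have hkf : ContDiffOn ℝ (⊤ : ℕ∞) (fun s => k (f s)) W := hk.comp_contDiffOn hfW
  have hdh_mem : IsJacobiCombinationOn f W (fderiv ℝ h) := ⟨p, hp, hdh⟩
  have hdkf_mem := isJacobiCombinationOn_fderiv_comp hW hfW hk
  refine ((hdh_mem.smul hkf).add (hdkf_mem.smul hhW)).congr fun t ht => ?_
  have hdiff {g : _ → ℝ} (hg : ContDiffOn ℝ (⊤ : ℕ∞) g W) : DifferentiableAt ℝ g t :=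
    (hg.differentiableOn (by simp)).differentiableAt (hW.mem_nhds ht)
  exact fderiv_mul (hdiff hkf) (hdiff hhW)

/-- The ramification module `ℛ_f` is a module over the target function ring
via `f^*`.  Let `U ⊆ ℝⁿ` be open, `a ∈ U`, and `f : U → ℝ^m` a `C^∞` map with components
`fⱼ`.  If `h : U → ℝ` is smooth and `dh = Σⱼ pⱼ dfⱼ` near `a` for smooth `pⱼ` (so
`h ∈ ℛ_f`), then for every `C^∞` function `k : ℝ^m → ℝ` there are smooth `qⱼ` near `a` with
`d((k ∘ f)·h) = Σⱼ qⱼ dfⱼ`.  (Part (1) of Lemma 8.3 of the paper.) -/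
theorem ramification_module_closed_under_pullback_mul
    (n m : ℕ) (U : Set (EuclideanSpace ℝ (Fin n))) (hU : IsOpen U)
    (a : EuclideanSpace ℝ (Fin n)) (ha : a ∈ U)
    (f : EuclideanSpace ℝ (Fin n) → EuclideanSpace ℝ (Fin m))
    (hf : ContDiffOn ℝ (⊤ : ℕ∞) f U)
    (h : EuclideanSpace ℝ (Fin n) → ℝ) (hh : ContDiffOn ℝ (⊤ : ℕ∞) h U)
    (W : Set (EuclideanSpace ℝ (Fin n))) (hW : IsOpen W) (haW : a ∈ W) (hWU : W ⊆ U)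
    (p : Fin m → EuclideanSpace ℝ (Fin n) → ℝ)
    (hp : ∀ j, ContDiffOn ℝ (⊤ : ℕ∞) (p j) W)
    (hdh : ∀ t ∈ W, fderiv ℝ h t = ∑ j, p j t • fderiv ℝ (fun s => f s j) t)
    (k : EuclideanSpace ℝ (Fin m) → ℝ) (hk : ContDiff ℝ (⊤ : ℕ∞) k) :
    ∃ W' : Set (EuclideanSpace ℝ (Fin n)), IsOpen W' ∧ a ∈ W' ∧ W' ⊆ U ∧
      ∃ q : Fin m → EuclideanSpace ℝ (Fin n) → ℝ,
        (∀ j, ContDiffOn ℝ (⊤ : ℕ∞) (q j) W') ∧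
        ∀ t ∈ W', fderiv ℝ (fun s => k (f s) * h s) t
          = ∑ j, q j t • fderiv ℝ (fun s => f s j) t :=
  ramification_module_closed_under_pullback_mul_general n m U a f hf h hh W hW haW hWU p hp hdh k hk
end

section
/- Let f : ℝ → ℝ^m be a C^∞ map and μ ≥ 1 an integer such that iteratedDeriv k f 0 = 0 for all k with 1 ≤ k < μ and iteratedDeriv μ f 0 ≠ 0 (i.e. f has finite order μ at 0). Then there exist ε > 0 and a C^∞ map v : (−ε, ε) → ℝ^m such that v(0) ≠ 0 and deriv f t = t^{μ−1} • v(t) for all |t| < ε. In particular, f is a frontal at 0: on a neighbourhood of 0 there is a smooth nowhere-vanishing vector field v along f and a smooth scalar function λ with f'(t) = λ(t) • v(t). -/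
/-!
Hadamard's lemma: by the fundamental theorem of calculus a smooth `g : ℝ → E` with `g 0 = 0` is
`t • h t` with `h t = ∫ s in 0..1, g' (t * s)`, and `h` is smooth by differentiation under the
integral sign. Iterating it on `g = f'`, whose derivatives of order `< μ - 1` vanish at `0`, writes
`f' t = t ^ (μ - 1) • v t`, and by the Leibniz rule `(μ - 1)! • v 0 = iteratedDeriv μ f 0 ≠ 0`.
-/

open Set Function intervalIntegral MeasureTheory Nat
open scoped ContDiff

section ParametricIntegral

variable {E : Type*} [NormedAddCommGroup E] [NormedSpace ℝ E]

theorem hasDerivAt_intervalIntegral_of_contDiff {F : ℝ → ℝ → E} (hF : ContDiff ℝ 1 (uncurry F))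
    (a b x₀ : ℝ) :
    HasDerivAt (fun x => ∫ s in a..b, F x s)
      (∫ s in a..b, fderiv ℝ (uncurry F) (x₀, s) (1, 0)) x₀ := by
  set F' : ℝ → ℝ → E := fun x s => fderiv ℝ (uncurry F) (x, s) (1, 0)
  have hF'_cont : Continuous (uncurry F') :=
    (hF.continuous_fderiv one_ne_zero).clm_apply continuous_const
  have hF_cont (x : ℝ) : Continuous (F x) := hF.continuous.comp (Continuous.prodMk_right x)
  obtain ⟨C, hC⟩ := ((isCompact_closedBall x₀ 1).prod isCompact_uIcc).exists_bound_of_continuousOn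
    hF'_cont.continuousOn
  have hderiv (x s : ℝ) : HasDerivAt (fun x => F x s) (F' x s) x := by
    have := (hF.differentiable one_ne_zero (x, s)).hasFDerivAt.comp_hasDerivAt x
      ((hasDerivAt_id x).prodMk (hasDerivAt_const x s))
    exact this
  refine (hasDerivAt_integral_of_dominated_loc_of_deriv_le (bound := fun _ => C) (a := a) (b := b)
    (Metric.closedBall_mem_nhds x₀ one_pos) (.of_forall fun x => (hF_cont x).aestronglyMeasurable)
    ((hF_cont x₀).intervalIntegrable a b)
    (hF'_cont.comp (Continuous.prodMk_right x₀)).aestronglyMeasurable ?_ intervalIntegrable_const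
    (.of_forall fun s _ x _ => hderiv x s)).2
  exact .of_forall fun s hs x hx => hC (x, s) ⟨hx, uIoc_subset_uIcc hs⟩

theorem contDiff_intervalIntegral_of_contDiff {F : ℝ → ℝ → E} (hF : ContDiff ℝ ∞ (uncurry F))
    (a b : ℝ) : ContDiff ℝ ∞ (fun x => ∫ s in a..b, F x s) := by
  refine contDiff_infty.2 fun n => ?_
  induction n generalizing F with
  | zero =>
    exact contDiff_zero.2 <| continuous_iff_continuousAt.2 fun x =>
      (hasDerivAt_intervalIntegral_of_contDiff (hF.of_le (by simp)) a b x).continuousAt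
  | succ n ih =>
    have hderiv := hasDerivAt_intervalIntegral_of_contDiff (hF.of_le (by simp)) a b
    rw [Nat.cast_succ, contDiff_succ_iff_deriv]
    refine ⟨fun x => (hderiv x).differentiableAt, by simp, ?_⟩
    rw [funext fun x => (hderiv x).deriv]
    exact ih ((hF.fderiv_right le_rfl).clm_apply contDiff_const)

end ParametricIntegral

theorem iteratedDeriv_pow_smul_zero {𝕜 E : Type*} [NontriviallyNormedField 𝕜]
    [NormedAddCommGroup E] [NormedSpace 𝕜 E] {v : 𝕜 → E} (k : ℕ) (hv : ContDiffAt 𝕜 k v 0) :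
    iteratedDeriv k (fun t => t ^ k • v t) 0 = (k ! : 𝕜) • v 0 := by
  rw [← iteratedDerivWithin_univ, ← Pi.smul_def',
    iteratedDerivWithin_smul (f := fun t : 𝕜 => t ^ k) (mem_univ 0) uniqueDiffOn_univ (by fun_prop)
      hv.contDiffWithinAt,
    Finset.sum_eq_single_of_mem k (Finset.self_mem_range_succ k)]
  · simp [Nat.descFactorial_self]
  · intro i hi hik
    have : k - i ≠ 0 := by simp at hi; omega
    simp [this]

section Hadamard

variable {E : Type*} [NormedAddCommGroup E] [NormedSpace ℝ E] [CompleteSpace E]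

theorem exists_contDiff_eq_smul_of_eq_zero {g : ℝ → E} (hg : ContDiff ℝ ∞ g) (h0 : g 0 = 0) :
    ∃ h : ℝ → E, ContDiff ℝ ∞ h ∧ ∀ t, g t = t • h t := by
  have hg' : ContDiff ℝ ∞ (deriv g) := (contDiff_infty_iff_deriv.1 hg).2
  refine ⟨fun t => ∫ s in (0 : ℝ)..1, deriv g (t * s),
    contDiff_intervalIntegral_of_contDiff (F := fun t s => deriv g (t * s))
      (hg'.comp (contDiff_fst.mul contDiff_snd)) 0 1,
    fun t => ?_⟩
  rw [smul_integral_comp_mul_left, mul_zero, mul_one,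
    integral_deriv_eq_sub (fun x _ => hg.differentiable (by simp) x)
      (hg'.continuous.intervalIntegrable 0 t), h0, sub_zero]

theorem exists_contDiff_eq_pow_smul_of_iteratedDeriv_eq_zero {g : ℝ → E} (hg : ContDiff ℝ ∞ g)
    (k : ℕ) (hvan : ∀ j < k, iteratedDeriv j g 0 = 0) :
    ∃ v : ℝ → E, ContDiff ℝ ∞ v ∧ ∀ t, g t = t ^ k • v t := by
  induction k with
  | zero => exact ⟨g, hg, by simp⟩
  | succ k ih =>
    obtain ⟨v, hv, hgv⟩ := ih fun j hj => hvan j (by omega)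
    have hv0 : v 0 = 0 := by
      have := iteratedDeriv_pow_smul_zero k (hv.contDiffAt.of_le (WithTop.coe_le_coe.2 le_top))
      rw [← funext hgv, hvan k k.lt_succ_self] at this
      exact (smul_eq_zero.1 this.symm).resolve_left (cast_ne_zero.2 (factorial_ne_zero k))
    obtain ⟨w, hw, hvw⟩ := exists_contDiff_eq_smul_of_eq_zero hv hv0
    exact ⟨w, hw, fun t => by rw [hgv, hvw, smul_smul, pow_succ]⟩

end Hadamard

/-- A curve-germ of finite order is a frontal.
Let `f : ℝ → ℝ^m` be `C^∞` with `iteratedDeriv k f 0 = 0` for `1 ≤ k < μ` and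
`iteratedDeriv μ f 0 ≠ 0` (so `f` has order `μ` at `0`).  Then there are `ε > 0` and a
`C^∞` map `v : (−ε, ε) → ℝ^m` with `v 0 ≠ 0` and `deriv f t = t^{μ−1} • v t` for `|t| < ε`;
in particular `f` is a frontal at `0`.  (First assertion of Lemma 13.1 of the paper.) -/
theorem frontal_of_finite_order_curve
    (m : ℕ) (f : ℝ → EuclideanSpace ℝ (Fin m)) (hf : ContDiff ℝ (⊤ : ℕ∞) f)
    (μ : ℕ) (hμ : 1 ≤ μ)
    (hvanish : ∀ k : ℕ, 1 ≤ k → k < μ → iteratedDeriv k f 0 = 0)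
    (hne : iteratedDeriv μ f 0 ≠ 0) :
    ∃ ε > (0 : ℝ), ∃ v : ℝ → EuclideanSpace ℝ (Fin m),
      ContDiffOn ℝ (⊤ : ℕ∞) v (Set.Ioo (-ε) ε) ∧ v 0 ≠ 0 ∧
      ∀ t ∈ Set.Ioo (-ε) ε, deriv f t = t ^ (μ - 1) • v t := by
  have hf' : ContDiff ℝ ∞ (deriv f) := (contDiff_infty_iff_deriv.1 hf).2
  have hderiv_iter (j : ℕ) : iteratedDeriv j (deriv f) 0 = iteratedDeriv (j + 1) f 0 := by
    rw [iteratedDeriv_succ']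
  obtain ⟨v, hv, hfv⟩ := exists_contDiff_eq_pow_smul_of_iteratedDeriv_eq_zero hf' (μ - 1)
    fun j hj => by rw [hderiv_iter]; exact hvanish (j + 1) (by omega) (by omega)
  have hv0 : ((μ - 1)! : ℝ) • v 0 = iteratedDeriv μ f 0 := by
    rw [← iteratedDeriv_pow_smul_zero _ (hv.contDiffAt.of_le (WithTop.coe_le_coe.2 le_top)),
      ← funext hfv, hderiv_iter, Nat.sub_add_cancel hμ]
  refine ⟨1, one_pos, v, hv.contDiffOn, fun h => hne ?_, fun t _ => hfv t⟩
  rw [← hv0, h, smul_zero]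
end

section
/- Let f : ℝ → ℝ^m be a map which is real-analytic on a neighbourhood of 0 (each component is AnalyticAt ℝ at every point of the neighbourhood) and which is not constant on any neighbourhood of 0. Then f is a frontal at 0: there exist ε > 0, a C^∞ map v : (−ε, ε) → ℝ^m with v(t) ≠ 0 for all |t| < ε, and a C^∞ function λ : (−ε, ε) → ℝ such that deriv f t = λ(t) • v(t) for all |t| < ε. -/
/-! Since `f` is not locally constant, its derivative is an analytic germ that does not vanish
identically, so near `0` it factors as `f' t = t ^ n • g t` with `g` analytic and `g 0 ≠ 0`.
Then `v = g` and `λ t = t ^ n` frame `f'` on a small interval where `g` has no zero. -/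

open Filter Topology Metric

theorem eventuallyEq_const_of_deriv_eventuallyEq_zero {𝕜 G : Type*} [RCLike 𝕜]
    [NormedAddCommGroup G] [NormedSpace 𝕜 G] {f : 𝕜 → G} {x : 𝕜}
    (hf : ∀ᶠ y in 𝓝 x, DifferentiableAt 𝕜 f y) (hf' : deriv f =ᶠ[𝓝 x] 0) :
    f =ᶠ[𝓝 x] fun _ => f x := by
  obtain ⟨ε, hε, hball⟩ := Metric.eventually_nhds_iff_ball.mp (hf.and hf')
  filter_upwards [ball_mem_nhds x hε] with y hy
  exact isOpen_ball.is_const_of_deriv_eq_zero (convex_ball x ε).isPreconnected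
    (fun z hz => (hball z hz).1.differentiableWithinAt) (fun z hz => (hball z hz).2) hy
    (mem_ball_self hε)

theorem AnalyticAt.exists_contDiffOn_smul_nonvanishing {𝕜 E : Type*}
    [NontriviallyNormedField 𝕜] [NormedAddCommGroup E] [NormedSpace 𝕜 E] [CompleteSpace E]
    {f : 𝕜 → E} {x : 𝕜} (hf : AnalyticAt 𝕜 f x) (hf0 : ¬ ∀ᶠ z in 𝓝 x, f z = 0) :
    ∃ ε > (0 : ℝ), ∃ v : 𝕜 → E, ∃ lam : 𝕜 → 𝕜,
      ContDiffOn 𝕜 (⊤ : ℕ∞) v (ball x ε) ∧ ContDiffOn 𝕜 (⊤ : ℕ∞) lam (ball x ε) ∧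
      (∀ t ∈ ball x ε, v t ≠ 0) ∧ ∀ t ∈ ball x ε, f t = lam t • v t := by
  obtain ⟨n, g, hg, hgx, hfg⟩ := hf.exists_eventuallyEq_pow_smul_nonzero_iff.mpr hf0
  obtain ⟨ε, hε, hball⟩ := Metric.eventually_nhds_iff_ball.mp
    ((hfg.and hg.eventually_analyticAt).and (hg.continuousAt.eventually_ne hgx))
  refine ⟨ε, hε, g, fun t => (t - x) ^ n, ?_, ?_, fun t ht => (hball t ht).2,
    fun t ht => (hball t ht).1.1⟩
  · exact fun t ht => (hball t ht).1.2.contDiffAt.contDiffWithinAt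
  · exact ((contDiff_id.sub contDiff_const).pow n).contDiffOn

theorem frontal_of_nonconstant_analytic_curve_general
    (m : ℕ) (f : ℝ → EuclideanSpace ℝ (Fin m))
    (U : Set ℝ) (h0 : (0 : ℝ) ∈ U)
    (hf : ∀ x ∈ U, AnalyticAt ℝ f x)
    (hnc : ∀ V ∈ nhds (0 : ℝ), ¬ Set.EqOn f (fun _ => f 0) V) :
    ∃ ε > (0 : ℝ), ∃ v : ℝ → EuclideanSpace ℝ (Fin m), ∃ lam : ℝ → ℝ,
      ContDiffOn ℝ (⊤ : ℕ∞) v (Set.Ioo (-ε) ε) ∧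
      ContDiffOn ℝ (⊤ : ℕ∞) lam (Set.Ioo (-ε) ε) ∧
      (∀ t ∈ Set.Ioo (-ε) ε, v t ≠ 0) ∧
      (∀ t ∈ Set.Ioo (-ε) ε, deriv f t = lam t • v t) := by
  have hf0 : AnalyticAt ℝ f 0 := hf 0 h0
  have hderiv : ¬ ∀ᶠ t in 𝓝 (0 : ℝ), deriv f t = 0 := fun h => by
    obtain ⟨V, hV, hfV⟩ := eventuallyEq_iff_exists_mem.mp
      (eventuallyEq_const_of_deriv_eventuallyEq_zero
        (hf0.eventually_analyticAt.mono fun _ h => h.differentiableAt) h)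
    exact hnc V hV hfV
  obtain ⟨ε, hε, v, lam, hv, hlam, hv0, hfv⟩ :=
    hf0.deriv.exists_contDiffOn_smul_nonvanishing hderiv
  rw [Real.ball_eq_Ioo, zero_sub, zero_add] at hv hlam hv0 hfv
  exact ⟨ε, hε, v, lam, hv, hlam, hv0, hfv⟩

/-- Any non-constant analytic curve-germ is a frontal.
Let `f : ℝ → ℝ^m` be real-analytic on an open neighbourhood of `0` and not constant on any
neighbourhood of `0`.  Then `f` is a frontal at `0`: there exist `ε > 0`, a `C^∞` map
`v : (−ε, ε) → ℝ^m` with `v t ≠ 0` for all `|t| < ε`, and a `C^∞` function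
`λ : (−ε, ε) → ℝ` such that `deriv f t = λ t • v t` for all `|t| < ε`.
(Corollary 13.2 of the paper.) -/
theorem frontal_of_nonconstant_analytic_curve
    (m : ℕ) (f : ℝ → EuclideanSpace ℝ (Fin m))
    (U : Set ℝ) (hU : IsOpen U) (h0 : (0 : ℝ) ∈ U)
    (hf : ∀ x ∈ U, AnalyticAt ℝ f x)
    (hnc : ∀ V ∈ nhds (0 : ℝ), ¬ Set.EqOn f (fun _ => f 0) V) :
    ∃ ε > (0 : ℝ), ∃ v : ℝ → EuclideanSpace ℝ (Fin m), ∃ lam : ℝ → ℝ,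
      ContDiffOn ℝ (⊤ : ℕ∞) v (Set.Ioo (-ε) ε) ∧
      ContDiffOn ℝ (⊤ : ℕ∞) lam (Set.Ioo (-ε) ε) ∧
      (∀ t ∈ Set.Ioo (-ε) ε, v t ≠ 0) ∧
      (∀ t ∈ Set.Ioo (-ε) ε, deriv f t = lam t • v t) :=
  frontal_of_nonconstant_analytic_curve_general m f U h0 hf hnc
end

section
/- Define φ : ℝ → ℝ by φ(t) = exp(−1/t²) for t > 0 and φ(t) = 0 for t ≤ 0 (a C^∞ function), and define the half cuspidal edge h : ℝ² → ℝ³ by h(t₁, t₂) = (t₁, t₂², t₂³ + φ(t₁)·t₂). Then h is not a frontal at the origin (0, 0): there do NOT exist an open neighbourhood V of (0, 0) and smooth maps h₁, h₂ : V → ℝ³ such that h₁(t), h₂(t) are linearly independent and range(fderiv ℝ h t) ⊆ span{h₁(t), h₂(t)} for every t ∈ V. -/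
noncomputable section

open Set

/-- The flat function `φ(t) = exp(−1/t²)` for `t > 0`, `φ(t) = 0` for `t ≤ 0`
(a `C^∞` function). -/
def flatPhi (t : ℝ) : ℝ := if 0 < t then Real.exp (-1 / t ^ 2) else 0

/-- The half cuspidal edge `h(t₁, t₂) = (t₁, t₂², t₂³ + φ(t₁)·t₂)`. -/
def halfCuspidalEdge (t : EuclideanSpace ℝ (Fin 2)) : EuclideanSpace ℝ (Fin 3) :=
  (EuclideanSpace.equiv (Fin 3) ℝ).symm
    ![t 0, (t 1) ^ 2, (t 1) ^ 3 + flatPhi (t 0) * t 1]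

/-! A frame `h₁, h₂` as in the statement would give a normal field `N = h₁ × h₂` along
`halfCuspidalEdge`, continuous and nonvanishing at the origin. On the half-axis
`{t 0 > 0, t 1 = 0}` the image of the derivative is spanned by `(1, 0, 0)` and `(0, 0, φ (t 0))`
with `φ (t 0) > 0`, so `N 0 = N 2 = 0` there. On `{t 0 < 0}`, where `φ` vanishes identically, the
image contains `(0, 2 t 1, 3 (t 1)²)`, so `2 N 1 + 3 (t 1) N 2 = 0` wherever `t 1 ≠ 0`. Both sets
accumulate at the origin, so `N` vanishes there: a contradiction. -/

open Matrix Filter Topology WithLp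

lemma dotProduct_cross_eq_zero_of_mem_span {R : Type*} [CommRing R] {p : ENNReal}
    {u v w : WithLp p (Fin 3 → R)} (h : u ∈ Submodule.span R {v, w}) :
    ofLp u ⬝ᵥ ofLp v ⨯₃ ofLp w = 0 := by
  obtain ⟨a, b, rfl⟩ := Submodule.mem_span_pair.1 h
  simp [add_dotProduct, dot_self_cross, dot_cross_self]

lemma cross_ne_zero_of_linearIndependent {F : Type*} [Field F] {p : ENNReal}
    {v w : WithLp p (Fin 3 → F)} (h : LinearIndependent F ![v, w]) :
    ofLp v ⨯₃ ofLp w ≠ 0 := by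
  rw [crossProduct_ne_zero_iff_linearIndependent]
  have hcomp : ![ofLp v, ofLp w] = WithLp.linearEquiv p F (Fin 3 → F) ∘ ![v, w] := by
    ext i : 1
    fin_cases i <;> rfl
  rw [hcomp]
  exact h.map' _ (LinearEquiv.ker _)

lemma continuous_cross {R : Type*} [CommRing R] [TopologicalSpace R] [IsTopologicalRing R] :
    Continuous fun p : (Fin 3 → R) × (Fin 3 → R) => p.1 ⨯₃ p.2 := by
  simp only [cross_apply]
  fun_prop

lemma frequently_nhds_zero_of_forall_pos_smul {E : Type*} [AddCommGroup E] [Module ℝ E]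
    [TopologicalSpace E] [ContinuousSMul ℝ E] {P : E → Prop} (v : E)
    (h : ∀ s : ℝ, 0 < s → P (s • v)) : ∃ᶠ x in 𝓝 (0 : E), P x := by
  have hv : Tendsto (fun s : ℝ => s • v) (𝓝[>] 0) (𝓝 0) :=
    ((continuous_id.smul continuous_const).tendsto' 0 0 (zero_smul ℝ v)).mono_left
      nhdsWithin_le_nhds
  exact hv.frequently (Eventually.frequently (eventually_nhdsWithin_of_forall h))

lemma differentiableAt_flatPhi {t : ℝ} (ht : t ≠ 0) : DifferentiableAt ℝ flatPhi t := by
  rcases ht.lt_or_gt with ht | ht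
  · have hφ : flatPhi =ᶠ[𝓝 t] fun _ => 0 := by
      filter_upwards [gt_mem_nhds ht] with s hs
      exact if_neg hs.not_gt
    exact (differentiableAt_const 0).congr_of_eventuallyEq hφ
  · have hφ : flatPhi =ᶠ[𝓝 t] fun s => Real.exp (-1 / s ^ 2) := by
      filter_upwards [lt_mem_nhds ht] with s hs
      exact if_pos hs
    refine DifferentiableAt.congr_of_eventuallyEq ?_ hφ
    fun_prop (disch := positivity)

lemma fderiv_halfCuspidalEdge_apply {t : EuclideanSpace ℝ (Fin 2)}
    (ht : DifferentiableAt ℝ flatPhi (t 0)) (v : EuclideanSpace ℝ (Fin 2)) :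
    fderiv ℝ halfCuspidalEdge t v = toLp 2 ![v 0, 2 * t 1 * v 1,
      (3 * t 1 ^ 2 + flatPhi (t 0)) * v 1 + deriv flatPhi (t 0) * t 1 * v 0] := by
  set p₀ : EuclideanSpace ℝ (Fin 2) →L[ℝ] ℝ := EuclideanSpace.proj 0
  set p₁ : EuclideanSpace ℝ (Fin 2) →L[ℝ] ℝ := EuclideanSpace.proj 1
  have hsq : HasFDerivAt (fun s : EuclideanSpace ℝ (Fin 2) => s 1 ^ 2) ((2 * t 1) • p₁) t :=
    ((hasDerivAt_pow 2 (t 1)).comp_hasFDerivAt (h₂ := (· ^ 2)) t p₁.hasFDerivAt).congr_fderiv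
      (by ext; simp)
  have hthird : HasFDerivAt (fun s : EuclideanSpace ℝ (Fin 2) => s 1 ^ 3 + flatPhi (s 0) * s 1)
      ((3 * t 1 ^ 2 + flatPhi (t 0)) • p₁ + (deriv flatPhi (t 0) * t 1) • p₀) t :=
    (((hasDerivAt_pow 3 (t 1)).comp_hasFDerivAt (h₂ := (· ^ 3)) t p₁.hasFDerivAt).add
      ((ht.hasDerivAt.comp_hasFDerivAt (h₂ := flatPhi) t p₀.hasFDerivAt).mul
        p₁.hasFDerivAt)).congr_fderiv (by ext; simp [p₀, p₁]; ring)
  have hcoords : HasFDerivAt (fun s : EuclideanSpace ℝ (Fin 2) =>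
      ![s 0, s 1 ^ 2, s 1 ^ 3 + flatPhi (s 0) * s 1])
      (ContinuousLinearMap.pi ![p₀, (2 * t 1) • p₁,
        (3 * t 1 ^ 2 + flatPhi (t 0)) • p₁ + (deriv flatPhi (t 0) * t 1) • p₀]) t := by
    refine hasFDerivAt_pi.2 fun i => ?_
    fin_cases i
    exacts [p₀.hasFDerivAt, hsq, hthird]
  have hh : HasFDerivAt halfCuspidalEdge _ t :=
    (EuclideanSpace.equiv (Fin 3) ℝ).symm.hasFDerivAt.comp t hcoords
  rw [hh.fderiv]
  ext i
  fin_cases i <;> simp [p₀, p₁]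

lemma normal_halfCuspidalEdge_of_pos {t : EuclideanSpace ℝ (Fin 2)} (ht₀ : 0 < t 0)
    (ht₁ : t 1 = 0) {n : Fin 3 → ℝ}
    (hn : ∀ v, ofLp (fderiv ℝ halfCuspidalEdge t v) ⬝ᵥ n = 0) : n 0 = 0 ∧ n 2 = 0 := by
  have hφ : 0 < flatPhi (t 0) := by simp [flatPhi, ht₀, Real.exp_pos]
  have h₀ := hn (EuclideanSpace.single 0 1)
  have h₁ := hn (EuclideanSpace.single 1 1)
  simp [fderiv_halfCuspidalEdge_apply (differentiableAt_flatPhi ht₀.ne'), ht₁] at h₀ h₁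
  exact ⟨h₀, h₁.resolve_left hφ.ne'⟩

lemma normal_halfCuspidalEdge_of_neg {t : EuclideanSpace ℝ (Fin 2)} (ht₀ : t 0 < 0)
    (ht₁ : t 1 ≠ 0) {n : Fin 3 → ℝ}
    (hn : ∀ v, ofLp (fderiv ℝ halfCuspidalEdge t v) ⬝ᵥ n = 0) :
    2 * n 1 + 3 * t 1 * n 2 = 0 := by
  have hφ : flatPhi (t 0) = 0 := if_neg ht₀.not_gt
  have h₁ := hn (EuclideanSpace.single 1 1)
  simp [fderiv_halfCuspidalEdge_apply (differentiableAt_flatPhi ht₀.ne), hφ] at h₁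
  change 2 * t 1 * n 1 + 3 * t 1 ^ 2 * n 2 = 0 at h₁
  refine (mul_eq_zero.1 ?_).resolve_left ht₁
  linear_combination h₁

lemma halfCuspidalEdge_normal_eq_zero {V : Set (EuclideanSpace ℝ (Fin 2))} (hV : V ∈ 𝓝 0)
    {N : EuclideanSpace ℝ (Fin 2) → Fin 3 → ℝ} (hN : ContinuousAt N 0)
    (hperp : ∀ t ∈ V, ∀ v, ofLp (fderiv ℝ halfCuspidalEdge t v) ⬝ᵥ N t = 0) : N 0 = 0 := by
  have hright : ∃ᶠ t in 𝓝 0, (0 < t 0 ∧ t 1 = 0) ∧ t ∈ V :=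
    (frequently_nhds_zero_of_forall_pos_smul (EuclideanSpace.single 0 1)
      fun s hs => by simp [hs]).and_eventually hV
  have hleft : ∃ᶠ t in 𝓝 0, (t 0 < 0 ∧ t 1 ≠ 0) ∧ t ∈ V :=
    (frequently_nhds_zero_of_forall_pos_smul !₂[-1, 1]
      fun s hs => by simp [hs, hs.ne']).and_eventually hV
  have hcomp (i : Fin 3) : ContinuousAt (fun t => N t i) 0 :=
    (continuous_apply i).continuousAt.comp hN
  have hN₀ : N 0 0 = 0 := tendsto_nhds_unique_of_frequently_eq (hcomp 0) tendsto_const_nhds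
    (hright.mono fun t ⟨⟨ht₀, ht₁⟩, htV⟩ =>
      (normal_halfCuspidalEdge_of_pos ht₀ ht₁ (hperp t htV)).1)
  have hN₂ : N 0 2 = 0 := tendsto_nhds_unique_of_frequently_eq (hcomp 2) tendsto_const_nhds
    (hright.mono fun t ⟨⟨ht₀, ht₁⟩, htV⟩ =>
      (normal_halfCuspidalEdge_of_pos ht₀ ht₁ (hperp t htV)).2)
  have hN₁ : 2 * N 0 1 + 3 * (0 : EuclideanSpace ℝ (Fin 2)) 1 * N 0 2 = 0 :=
    tendsto_nhds_unique_of_frequently_eq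
      (((hcomp 1).const_mul 2).add
        (((EuclideanSpace.proj 1).continuous.continuousAt.const_mul 3).mul (hcomp 2)))
      tendsto_const_nhds
      (hleft.mono fun t ⟨⟨ht₀, ht₁⟩, htV⟩ =>
        normal_halfCuspidalEdge_of_neg ht₀ ht₁ (hperp t htV))
  ext i
  fin_cases i
  · exact hN₀
  · simpa using hN₁
  · exact hN₂

/-- The half cuspidal edge is not a frontal at the origin:
there do not exist an open neighbourhood `V` of `(0,0)` and smooth maps
`h₁, h₂ : V → ℝ³` which are linearly independent at every point of `V` and whose pointwise
span contains the range of the derivative of `halfCuspidalEdge` at every point of `V`.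
(Example 2.1 of the paper.) -/
theorem halfCuspidalEdge_not_frontal_at_origin :
    ¬ ∃ (V : Set (EuclideanSpace ℝ (Fin 2)))
        (h₁ h₂ : EuclideanSpace ℝ (Fin 2) → EuclideanSpace ℝ (Fin 3)),
      IsOpen V ∧ (0 : EuclideanSpace ℝ (Fin 2)) ∈ V ∧
      ContDiffOn ℝ (⊤ : ℕ∞) h₁ V ∧ ContDiffOn ℝ (⊤ : ℕ∞) h₂ V ∧
      (∀ t ∈ V, LinearIndependent ℝ ![h₁ t, h₂ t]) ∧
      (∀ t ∈ V, LinearMap.range (fderiv ℝ halfCuspidalEdge t :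
          EuclideanSpace ℝ (Fin 2) →ₗ[ℝ] EuclideanSpace ℝ (Fin 3)) ≤
        Submodule.span ℝ {h₁ t, h₂ t}) := by
  rintro ⟨V, h₁, h₂, hV, h0V, hh₁, hh₂, hind, hspan⟩
  have hVnhds : V ∈ 𝓝 0 := hV.mem_nhds h0V
  have hcont {h : EuclideanSpace ℝ (Fin 2) → EuclideanSpace ℝ (Fin 3)}
      (hh : ContDiffOn ℝ (⊤ : ℕ∞) h V) : ContinuousAt (fun t => ofLp (h t)) 0 :=
    (PiLp.continuous_ofLp 2 _).continuousAt.comp (hh.continuousOn.continuousAt hVnhds)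
  refine cross_ne_zero_of_linearIndependent (hind 0 h0V)
    (halfCuspidalEdge_normal_eq_zero hVnhds ?_ fun t ht v =>
      dotProduct_cross_eq_zero_of_mem_span (hspan t ht ⟨v, rfl⟩))
  exact continuous_cross.continuousAt.comp ((hcont hh₁).prodMk (hcont hh₂))
end
end
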